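/- arXiv:math/0608035 — 12 statements merged into one kernel-verified Lean document; each statement's English description precedes it below -/
import Mathlib

section
/- If P is a compact, connected, infinite Hausdorff space and U ⊆ P is a nonempty open set, then there is a closed subset R ⊆ U such that R is connected and infinite. -/
open Set

/-- If P is a compact, connected, infinite Hausdorff space and U ⊆ P is a
nonempty open set, then there is a closed R ⊆ U which is connected and infinite. -/
theorem stmt0 {P : Type*} [TopologicalSpace P] [CompactSpace P] [T2Space P]
    [ConnectedSpace P] [Infinite P] {U : Set P} (hU : IsOpen U) (hne : U.Nonempty) :
    ∃ R : Set P, R ⊆ U ∧ IsClosed R ∧ IsConnected R ∧ R.Infinite := by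
  rcases eq_or_ne U univ with rfl | hUne
  · exact ⟨univ, subset_rfl, isClosed_univ, isConnected_univ,
      Set.infinite_univ⟩
  obtain ⟨x, hx⟩ := hne
  -- find a compact (hence closed) neighborhood V of x inside U
  obtain ⟨V, hVcomp, hxV, hVU⟩ := exists_compact_subset hU hx
  have hVclosed : IsClosed V := hVcomp.isClosed
  have hVneuniv : V ≠ univ := fun h => hUne (univ_subset_iff.mp (h ▸ hVU))
  have hxV' : x ∈ V := interior_subset hxV
  -- work in the subspace V
  haveI : CompactSpace V := isCompact_iff_compactSpace.mp hVcomp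
  set y : V := ⟨x, hxV'⟩
  set R : Set P := Subtype.val '' connectedComponent y with hR
  have hRV : R ⊆ V := by rintro _ ⟨z, _, rfl⟩; exact z.2
  have hxR : x ∈ R := ⟨y, mem_connectedComponent, rfl⟩
  have hclemb : Topology.IsClosedEmbedding (Subtype.val : V → P) :=
    hVclosed.isClosedEmbedding_subtypeVal
  have hRclosed : IsClosed R := hclemb.isClosed_iff_image_isClosed.mp
    isClosed_connectedComponent
  have hRconn : IsConnected R :=
    (isConnected_connectedComponent).image _ continuous_subtype_val.continuousOn
  -- key step: R meets the frontier of V (boundary bumping)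
  have hfront : (R ∩ frontier V).Nonempty := by
    by_contra hdisj
    rw [not_nonempty_iff_eq_empty] at hdisj
    -- F := preimage of frontier V in the subspace
    set F : Set V := Subtype.val ⁻¹' frontier V with hF
    have hFcomp : IsCompact F :=
      (isClosed_frontier.preimage continuous_subtype_val).isCompact
    have hFdisj : F ∩ ⋂ (Z : {Z : Set V // IsClopen Z ∧ y ∈ Z}), Z = ∅ := by
      rw [← connectedComponent_eq_iInter_isClopen]
      ext z; simp only [mem_inter_iff, mem_empty_iff_false, iff_false, not_and]
      intro hzF hzC
      have : (z : P) ∈ R ∩ frontier V := ⟨⟨z, hzC, rfl⟩, hzF⟩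
      rw [hdisj] at this; exact this
    obtain ⟨t, ht⟩ := hFcomp.elim_finite_subfamily_closed _
      (fun Z => Z.2.1.isClosed) hFdisj
    -- A' : clopen in V containing y, disjoint from F
    set A' : Set V := ⋂ i ∈ t, (i : Set V) with hA'
    have hA'clopen : IsClopen A' := by
      apply Set.Finite.isClopen_biInter t.finite_toSet
      exact fun i _ => i.2.1
    have hyA' : y ∈ A' := mem_iInter₂.mpr fun i _ => i.2.2
    -- A : image in P
    set A : Set P := Subtype.val '' A' with hA
    have hAV : A ⊆ V := by rintro _ ⟨z, _, rfl⟩; exact z.2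
    have hAclosed : IsClosed A :=
      hclemb.isClosed_iff_image_isClosed.mp hA'clopen.isClosed
    have hAfront : A ∩ frontier V = ∅ := by
      ext z; simp only [mem_inter_iff, mem_empty_iff_false, iff_false, not_and]
      rintro ⟨w, hw, rfl⟩ hzf
      have : w ∈ F ∩ ⋂ i ∈ t, (i : Set V) := ⟨hzf, hw⟩
      rw [ht] at this; exact this
    have hAint : A ⊆ interior V := by
      intro z hz
      have hzV : z ∈ V := hAV hz
      by_contra h
      have hm : z ∈ A ∩ frontier V :=
        ⟨hz, by rw [hVclosed.frontier_eq]; exact ⟨hzV, h⟩⟩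
      rw [hAfront] at hm; exact hm
    have hAopen : IsOpen A := by
      obtain ⟨O, hO, hOA⟩ := hA'clopen.isOpen
      -- A' = val ⁻¹' O, so A = O ∩ V
      have hAeq : A = O ∩ interior V := by
        apply Subset.antisymm
        · rintro z ⟨w, hw, rfl⟩
          have h1 : w ∈ Subtype.val ⁻¹' O := by rw [← hOA] at hw; exact hw
          exact ⟨h1, hAint ⟨w, hw, rfl⟩⟩
        · rintro z ⟨hzO, hzi⟩
          exact ⟨⟨z, interior_subset hzi⟩, by rw [← hOA]; exact hzO, rfl⟩
      rw [hAeq]; exact hO.inter isOpen_interior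
    have : A = univ := (isClopen_iff.mp ⟨hAclosed, hAopen⟩).resolve_left
      (Set.nonempty_iff_ne_empty.mp ⟨x, ⟨y, hyA', rfl⟩⟩)
    exact hVneuniv (univ_subset_iff.mp (this ▸ hAV))
  -- R is infinite: it contains x (interior point) and a frontier point
  obtain ⟨z, hzR, hzf⟩ := hfront
  have hzx : z ≠ x := fun h => (h ▸ hzf).2 hxV
  have hRinf : R.Infinite :=
    hRconn.isPreconnected.infinite_of_nontrivial ⟨z, hzR, x, hxR, hzx⟩
  exact ⟨R, hRV.trans hVU, hRclosed, hRconn, hRinf⟩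
end

section
/- If X is a compact, connected, infinite Hausdorff space, then the poset K_X of all closed, connected, infinite subsets of X, ordered by inclusion (p ≤ q iff p ⊆ q), is separative and atomless. -/
open Set

/-- Boundary bumping-style lemma: in a compact connected Hausdorff space, for any
open `V ≠ univ` and `x ∈ V`, there is a closed connected infinite set containing `x`
inside `closure V`. -/
lemma bump {Y : Type*} [TopologicalSpace Y] [CompactSpace Y] [T2Space Y] [ConnectedSpace Y]
    {V : Set Y} (hV : IsOpen V) (hne : V ≠ Set.univ) {x : Y} (hx : x ∈ V) :
    ∃ C : Set Y, IsClosed C ∧ IsConnected C ∧ C.Infinite ∧ C ⊆ closure V ∧ x ∈ C := by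
  set F : Set Y := closure V with hF
  haveI : CompactSpace F := isCompact_iff_compactSpace.mp isClosed_closure.isCompact
  set x' : F := ⟨x, subset_closure hx⟩ with hx'
  set C' : Set F := connectedComponent x' with hC'
  have hC'closed : IsClosed C' := isClosed_connectedComponent
  have hC'conn : IsConnected C' := isConnected_connectedComponent
  set C : Set Y := Subtype.val '' C' with hC
  have hCclosed : IsClosed C :=
    (hC'closed.isCompact.image continuous_subtype_val).isClosed
  have hCconn : IsConnected C := hC'conn.image _ continuous_subtype_val.continuousOn
  have hCsub : C ⊆ closure V := by
    rintro _ ⟨a, _, rfl⟩; exact a.2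
  have hxC : x ∈ C := ⟨x', mem_connectedComponent, rfl⟩
  -- find a point of C' on the frontier of V
  have key : ∃ y ∈ C', (y : Y) ∈ frontier V := by
    by_contra h
    push_neg at h
    set K : Set F := Subtype.val ⁻¹' (frontier V) with hK
    have hKcomp : IsCompact K :=
      (isClosed_frontier.preimage continuous_subtype_val).isCompact
    have hdisj : K ∩ C' = ∅ := by
      ext a; simp only [mem_inter_iff, mem_empty_iff_false, iff_false]
      rintro ⟨haK, haC⟩
      exact h a haC haK
    have hiInter := connectedComponent_eq_iInter_isClopen x'
    have hne' : ¬ (K ∩ ⋂ s : { s : Set F // IsClopen s ∧ x' ∈ s }, (s : Set F)).Nonempty := by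
      rw [← hiInter, ← hC', hdisj]
      simp
    have := hKcomp.inter_iInter_nonempty
      (fun s : { s : Set F // IsClopen s ∧ x' ∈ s } => (s : Set F))
      (fun s => s.2.1.1)
    have hfin : ¬ ∀ u : Finset { s : Set F // IsClopen s ∧ x' ∈ s },
        (K ∩ ⋂ i ∈ u, (i : Set F)).Nonempty := fun hall => hne' (this hall)
    push_neg at hfin
    obtain ⟨u, hu⟩ := hfin
    set A : Set F := ⋂ i ∈ u, (i : Set F) with hA
    have hAclopen : IsClopen A := isClopen_biInter_finset fun s _ => s.2.1
    have hxA : x' ∈ A := mem_iInter₂.2 fun s _ => s.2.2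
    have hAK : A ∩ K = ∅ := by rw [inter_comm]; exact hu
    -- push A to Y
    set B : Set Y := Subtype.val '' A with hB
    have hBclosed : IsClosed B :=
      (hAclopen.1.isCompact.image continuous_subtype_val).isClosed
    have hBV : B ⊆ V := by
      rintro _ ⟨a, haA, rfl⟩
      have h1 : (a : Y) ∈ closure V := a.2
      have h2 : (a : Y) ∉ frontier V := by
        intro hfr
        have : a ∈ A ∩ K := ⟨haA, hfr⟩
        rw [hAK] at this; exact this
      have : (a : Y) ∈ interior V := by
        by_contra h3
        exact h2 ⟨h1, h3⟩
      rwa [hV.interior_eq] at this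
    have hBopen : IsOpen B := by
      obtain ⟨O, hO, hOA⟩ := isOpen_induced_iff.mp hAclopen.2
      have hBeq : B = O ∩ V := by
        apply Subset.antisymm
        · rintro _ ⟨a, haA, rfl⟩
          refine ⟨?_, hBV ⟨a, haA, rfl⟩⟩
          have : a ∈ Subtype.val ⁻¹' O := by rw [hOA]; exact haA
          exact this
        · rintro z ⟨hzO, hzV⟩
          refine ⟨⟨z, subset_closure hzV⟩, ?_, rfl⟩
          rw [← hOA]; exact hzO
      rw [hBeq]; exact hO.inter hV
    have hBclopen : IsClopen B := ⟨hBclosed, hBopen⟩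
    rcases isClopen_iff.mp hBclopen with h0 | h1
    · exact absurd h0 (Nonempty.ne_empty ⟨x, ⟨x', hxA, rfl⟩⟩)
    · exact hne (univ_subset_iff.mp (h1 ▸ hBV))
  obtain ⟨y, hyC, hyfr⟩ := key
  have hxy : x ≠ (y : Y) := by
    intro hxy
    have : x ∈ interior V := by rwa [hV.interior_eq]
    exact hyfr.2 (hxy ▸ this)
  have hCnt : C.Nontrivial := ⟨x, hxC, y, ⟨y, hyC, rfl⟩, hxy⟩
  exact ⟨C, hCclosed, hCconn, hCconn.isPreconnected.infinite_of_nontrivial hCnt, hCsub, hxC⟩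

/-- For X compact, connected, infinite Hausdorff, the poset K_X of closed,
connected, infinite subsets of X ordered by inclusion is separative and atomless. -/
theorem stmt1 {X : Type*} [TopologicalSpace X] [CompactSpace X] [T2Space X]
    [ConnectedSpace X] [Infinite X] :
    (∀ p q : {s : Set X // IsClosed s ∧ IsConnected s ∧ s.Infinite},
      ¬ p ≤ q → ∃ r, r ≤ p ∧ ¬ ∃ s, s ≤ r ∧ s ≤ q) ∧
    (∀ p : {s : Set X // IsClosed s ∧ IsConnected s ∧ s.Infinite},
      ∃ q r, q ≤ p ∧ r ≤ p ∧ ¬ ∃ s, s ≤ q ∧ s ≤ r) := by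
  -- helper: push a closed connected infinite subset of the subspace ↥p to X
  have push : ∀ (p : Set X), IsClosed p →
      ∀ C : Set p, IsClosed C → IsConnected C → C.Infinite →
      IsClosed (Subtype.val '' C : Set X) ∧ IsConnected (Subtype.val '' C : Set X) ∧
        (Subtype.val '' C : Set X).Infinite := by
    intro p hp C hCc hCconn hCinf
    haveI : CompactSpace p := isCompact_iff_compactSpace.mp hp.isCompact
    exact ⟨(hCc.isCompact.image continuous_subtype_val).isClosed,
      hCconn.image _ continuous_subtype_val.continuousOn,
      hCinf.image Subtype.val_injective.injOn⟩
  constructor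
  · -- separative
    rintro ⟨p, hpc, hpconn, hpinf⟩ ⟨q, hqc, hqconn, hqinf⟩ hpq
    have hpq' : ¬ p ⊆ q := hpq
    obtain ⟨x, hxp, hxq⟩ := not_subset.mp hpq'
    haveI : CompactSpace p := isCompact_iff_compactSpace.mp hpc.isCompact
    haveI : ConnectedSpace p := Subtype.connectedSpace ⟨⟨x, hxp⟩, hpconn.isPreconnected⟩
    by_cases hqp : (p ∩ q) = ∅
    · -- p and q disjoint: take r = p
      refine ⟨⟨p, hpc, hpconn, hpinf⟩, le_refl _, ?_⟩
      rintro ⟨⟨s, hsc, hsconn, hsinf⟩, hsr, hsq⟩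
      obtain ⟨z, hz⟩ := hsinf.nonempty
      have : z ∈ p ∩ q := ⟨hsr hz, hsq hz⟩
      rw [hqp] at this; exact this
    · -- separate x from q inside p
      set q' : Set p := Subtype.val ⁻¹' q with hq'
      have hq'c : IsClosed q' := hqc.preimage continuous_subtype_val
      set x' : p := ⟨x, hxp⟩ with hx'
      have hxq' : x' ∉ q' := hxq
      obtain ⟨U, W, hU, hW, hxU, hqW, hUW⟩ :=
        normal_separation (T1Space.t1 x') hq'c
          (by rw [disjoint_singleton_left]; exact hxq')
      have hUne : U ≠ univ := by
        intro h
        obtain ⟨z, hzp, hzq⟩ := nonempty_iff_ne_empty.mpr hqp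
        have hz' : (⟨z, hzp⟩ : p) ∈ q' := hzq
        exact (disjoint_left.mp hUW (h ▸ mem_univ _)) (hqW hz')
      obtain ⟨C, hCc, hCconn, hCinf, hCsub, hxC⟩ := bump hU hUne (hxU rfl)
      have hCq : ∀ a ∈ C, a ∉ q' := by
        intro a haC haq
        have : a ∈ W := hqW haq
        have : a ∈ closure U := hCsub haC
        have := closure_minimal (fun b hb => (disjoint_left.mp hUW hb :
          b ∉ W)) (hW.isClosed_compl) this
        exact this (hqW haq)
      obtain ⟨h1, h2, h3⟩ := push p hpc C hCc hCconn hCinf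
      refine ⟨⟨Subtype.val '' C, h1, h2, h3⟩, ?_, ?_⟩
      · rintro _ ⟨a, _, rfl⟩; exact a.2
      · rintro ⟨⟨s, hsc, hsconn, hsinf⟩, hsr, hsq⟩
        obtain ⟨z, hz⟩ := hsinf.nonempty
        obtain ⟨a, haC, haz⟩ := hsr hz
        exact hCq a haC (by rw [hq', mem_preimage, haz]; exact hsq hz)
  · -- atomless
    rintro ⟨p, hpc, hpconn, hpinf⟩
    haveI : CompactSpace p := isCompact_iff_compactSpace.mp hpc.isCompact
    haveI : ConnectedSpace p := Subtype.connectedSpace hpconn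
    haveI : Infinite p := hpinf.to_subtype
    obtain ⟨x, y, hxy⟩ := exists_pair_ne p
    obtain ⟨U, W, hU, hW, hxU, hyW, hUW⟩ :=
      normal_separation (T1Space.t1 x) (T1Space.t1 y)
        (by rwa [disjoint_singleton])
    -- shrink U to get closure inside U
    obtain ⟨U', hU'nhds, hU'closed, hU'sub⟩ :=
      exists_mem_nhds_isClosed_subset (hU.mem_nhds (hxU rfl))
    obtain ⟨W', hW'nhds, hW'closed, hW'sub⟩ :=
      exists_mem_nhds_isClosed_subset (hW.mem_nhds (hyW rfl))
    have hxint : x ∈ interior U' := mem_interior_iff_mem_nhds.mpr hU'nhds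
    have hyint : y ∈ interior W' := mem_interior_iff_mem_nhds.mpr hW'nhds
    have hUne : interior U' ≠ univ := by
      intro h
      exact disjoint_left.mp hUW (hU'sub (interior_subset (h ▸ mem_univ y))) (hyW rfl)
    have hWne : interior W' ≠ univ := by
      intro h
      exact disjoint_left.mp hUW (hxU rfl) (hW'sub (interior_subset (h ▸ mem_univ x)))
    obtain ⟨C, hCc, hCconn, hCinf, hCsub, hxC⟩ := bump isOpen_interior hUne hxint
    obtain ⟨D, hDc, hDconn, hDinf, hDsub, hyD⟩ := bump isOpen_interior hWne hyint
    have hCU : C ⊆ U := fun a ha =>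
      hU'sub ((closure_minimal interior_subset hU'closed) (hCsub ha))
    have hDW : D ⊆ W := fun a ha =>
      hW'sub ((closure_minimal interior_subset hW'closed) (hDsub ha))
    obtain ⟨h1, h2, h3⟩ := push p hpc C hCc hCconn hCinf
    obtain ⟨g1, g2, g3⟩ := push p hpc D hDc hDconn hDinf
    refine ⟨⟨Subtype.val '' C, h1, h2, h3⟩, ⟨Subtype.val '' D, g1, g2, g3⟩, ?_, ?_, ?_⟩
    · rintro _ ⟨a, _, rfl⟩; exact a.2
    · rintro _ ⟨a, _, rfl⟩; exact a.2
    · rintro ⟨⟨s, hsc, hsconn, hsinf⟩, hsC, hsD⟩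
      obtain ⟨z, hz⟩ := hsinf.nonempty
      obtain ⟨a, haC, haz⟩ := hsC hz
      obtain ⟨b, hbD, hbz⟩ := hsD hz
      have : a = b := Subtype.val_injective (haz.trans hbz.symm)
      exact disjoint_left.mp hUW (hCU haC) (hDW (this ▸ hbD))
end

section
/- If X is a compact, connected, infinite Hausdorff space and p, q are closed, connected, infinite subsets of X with p ∩ q totally disconnected, then there exist closed, connected, infinite subsets p₁ ⊆ p \ (p ∩ q) and q₁ ⊆ q \ (p ∩ q); in particular p₁ ∩ q₁ = ∅. -/
open Set

/-- In a compact connected Hausdorff space, given a closed proper subset `A`, there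
is a closed connected infinite set disjoint from `A`. -/
theorem aux_sub {Y : Type*} [TopologicalSpace Y] [CompactSpace Y] [T2Space Y]
    [ConnectedSpace Y] [Infinite Y] {A : Set Y} (hA : IsClosed A) (hAne : A ≠ univ) :
    ∃ C : Set Y, C ⊆ Aᶜ ∧ IsClosed C ∧ IsConnected C ∧ C.Infinite := by
  rcases eq_empty_or_nonempty A with hAe | hAne'
  · exact ⟨univ, by simp [hAe], isClosed_univ, isConnected_univ, infinite_univ⟩
  obtain ⟨x, hx⟩ : ∃ x, x ∉ A := by
    by_contra h; push_neg at h
    exact hAne (eq_univ_of_forall h)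
  -- regularity: closed neighborhood of x inside Aᶜ
  obtain ⟨t, ht, htc, hts⟩ := exists_mem_nhds_isClosed_subset (hA.isOpen_compl.mem_nhds hx)
  set V : Set Y := interior t with hV
  have hxV : x ∈ V := mem_interior_iff_mem_nhds.2 ht
  have hVopen : IsOpen V := isOpen_interior
  have hFA : closure V ⊆ Aᶜ := (closure_minimal interior_subset htc).trans hts
  set F : Set Y := closure V with hF
  have hFclosed : IsClosed F := isClosed_closure
  have hFcompact : IsCompact F := hFclosed.isCompact
  haveI : CompactSpace F := isCompact_iff_compactSpace.mp hFcompact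
  have hVF : V ⊆ F := subset_closure
  set x' : F := ⟨x, hVF hxV⟩ with hx'
  set C₀ : Set F := connectedComponent x' with hC₀
  set C : Set Y := Subtype.val '' C₀ with hC
  have hC₀closed : IsClosed C₀ := isClosed_connectedComponent
  have hCcompact : IsCompact C := (hC₀closed.isCompact).image continuous_subtype_val
  have hCclosed : IsClosed C := hCcompact.isClosed
  have hCconn : IsConnected C :=
    (isConnected_connectedComponent).image _ continuous_subtype_val.continuousOn
  have hCF : C ⊆ F := by rintro y ⟨z, _, rfl⟩; exact z.2
  have hCA : C ⊆ Aᶜ := hCF.trans hFA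
  refine ⟨C, hCA, hCclosed, hCconn, ?_⟩
  refine hCconn.isPreconnected.infinite_of_nontrivial ?_
  by_contra hnt
  rw [not_nontrivial_iff] at hnt
  -- then C₀ = {x'}, and we build a nonempty proper clopen subset of Y
  have hC₀sub : C₀ ⊆ {x'} := by
    intro z hz
    have h1 : (z : Y) ∈ C := ⟨z, hz, rfl⟩
    have h2 : (x' : Y) ∈ C := ⟨x', mem_connectedComponent, rfl⟩
    have := hnt h1 h2
    exact Subtype.ext this
  set B : Set F := Subtype.val ⁻¹' Vᶜ with hB
  have hBclosed : IsClosed B := (hVopen.isClosed_compl).preimage continuous_subtype_val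
  have hBdisj : B ∩ C₀ = ∅ := by
    apply eq_empty_of_subset_empty
    rintro z ⟨hzB, hzC⟩
    have := hC₀sub hzC
    rw [this] at hzB
    exact hzB hxV
  have hcomp := connectedComponent_eq_iInter_isClopen x'
  obtain ⟨u, hu⟩ := hBclosed.isCompact.elim_finite_subfamily_closed
      (fun s : { s : Set F // IsClopen s ∧ x' ∈ s } => (s : Set F))
      (fun s => s.2.1.1) (by rw [← hcomp]; exact hBdisj)
  set s : Set F := ⋂ i ∈ u, (i : Set F) with hs
  have hsclopen : IsClopen s := isClopen_biInter_finset fun i _ => i.2.1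
  have hxs : x' ∈ s := mem_iInter₂.2 fun i _ => i.2.2
  have hsV : ∀ z ∈ s, (z : Y) ∈ V := by
    intro z hz
    by_contra hzv
    have : z ∈ B ∩ ⋂ i ∈ u, (i : Set F) := ⟨hzv, hz⟩
    rw [hu] at this
    exact this
  set W : Set Y := Subtype.val '' s with hW
  have hWV : W ⊆ V := by rintro y ⟨z, hz, rfl⟩; exact hsV z hz
  have hWclosed : IsClosed W := ((hsclopen.1.isCompact).image continuous_subtype_val).isClosed
  have hWopen : IsOpen W := by
    obtain ⟨O, hO, hOs⟩ := (isOpen_induced_iff).mp hsclopen.2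
    have : W = O ∩ V := by
      apply Subset.antisymm
      · rintro y ⟨z, hz, rfl⟩
        exact ⟨by rw [← hOs] at hz; exact hz, hsV z hz⟩
      · rintro y ⟨hyO, hyV⟩
        exact ⟨⟨y, hVF hyV⟩, by rw [← hOs]; exact hyO, rfl⟩
    rw [this]; exact hO.inter hVopen
  have hWuniv : W = univ := IsClopen.eq_univ ⟨hWclosed, hWopen⟩ ⟨x, x', hxs, rfl⟩
  obtain ⟨a, ha⟩ := hAne'
  have : a ∈ V := hWV (hWuniv ▸ mem_univ a)
  exact (hFA (hVF this)) ha

/-- Extract a closed connected infinite subset of `p` avoiding `q`. -/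
theorem aux_piece {X : Type*} [TopologicalSpace X] [CompactSpace X] [T2Space X]
    [T2Space X] {p q : Set X}
    (hpc : IsClosed p) (hpconn : IsConnected p) (hpinf : p.Infinite)
    (hqc : IsClosed q) (hdisc : IsTotallyDisconnected (p ∩ q)) :
    ∃ p₁ : Set X, p₁ ⊆ p \ q ∧ IsClosed p₁ ∧ IsConnected p₁ ∧ p₁.Infinite := by
  haveI : CompactSpace p := isCompact_iff_compactSpace.mp hpc.isCompact
  haveI : ConnectedSpace p := Subtype.connectedSpace hpconn
  haveI : Infinite p := hpinf.to_subtype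
  set A : Set p := Subtype.val ⁻¹' q with hA
  have hAclosed : IsClosed A := hqc.preimage continuous_subtype_val
  have hAne : A ≠ univ := by
    intro h
    have hpq : p ⊆ q := by
      intro y hy
      have : (⟨y, hy⟩ : p) ∈ A := h ▸ mem_univ _
      exact this
    have hsub : p.Subsingleton :=
      hdisc p (subset_inter Subset.rfl hpq) hpconn.isPreconnected
    exact (hpinf.nontrivial.not_subsingleton) hsub
  obtain ⟨C, hCA, hCclosed, hCconn, hCinf⟩ := aux_sub hAclosed hAne
  refine ⟨Subtype.val '' C, ?_, ?_, ?_, ?_⟩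
  · rintro y ⟨z, hz, rfl⟩
    exact ⟨z.2, hCA hz⟩
  · exact ((hCclosed.isCompact).image continuous_subtype_val).isClosed
  · exact hCconn.image _ continuous_subtype_val.continuousOn
  · exact hCinf.image (Subtype.val_injective.injOn)

/-- If p, q are closed connected infinite subsets of a compact connected
infinite Hausdorff space X with p ∩ q totally disconnected, then there are closed connected
infinite p₁ ⊆ p \ (p ∩ q) and q₁ ⊆ q \ (p ∩ q); in particular p₁ ∩ q₁ = ∅. -/
theorem stmt2 {X : Type*} [TopologicalSpace X] [CompactSpace X] [T2Space X]
    [ConnectedSpace X] [Infinite X] {p q : Set X}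
    (hpc : IsClosed p) (hpconn : IsConnected p) (hpinf : p.Infinite)
    (hqc : IsClosed q) (hqconn : IsConnected q) (hqinf : q.Infinite)
    (hdisc : IsTotallyDisconnected (p ∩ q)) :
    ∃ p₁ q₁ : Set X, p₁ ⊆ p \ (p ∩ q) ∧ q₁ ⊆ q \ (p ∩ q) ∧
      IsClosed p₁ ∧ IsConnected p₁ ∧ p₁.Infinite ∧
      IsClosed q₁ ∧ IsConnected q₁ ∧ q₁.Infinite ∧ p₁ ∩ q₁ = ∅ := by
  obtain ⟨p₁, hp₁sub, hp₁c, hp₁conn, hp₁inf⟩ := aux_piece hpc hpconn hpinf hqc hdisc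
  obtain ⟨q₁, hq₁sub, hq₁c, hq₁conn, hq₁inf⟩ :=
    aux_piece hqc hqconn hqinf hpc (by rwa [inter_comm] at hdisc)
  refine ⟨p₁, q₁, ?_, ?_, hp₁c, hp₁conn, hp₁inf, hq₁c, hq₁conn, hq₁inf, ?_⟩
  · intro y hy; exact ⟨(hp₁sub hy).1, fun h => (hp₁sub hy).2 h.2⟩
  · intro y hy; exact ⟨(hq₁sub hy).1, fun h => (hq₁sub hy).2 h.1⟩
  · apply eq_empty_of_subset_empty
    rintro y ⟨hy₁, hy₂⟩
    exact (hp₁sub hy₁).2 (hq₁sub hy₂).1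
end

section
/- If 2^{ℵ₀} = 2^{ℵ₁} and 2 ≤ κ ≤ 2^{ℵ₀}, λ ≤ 2^{ℵ₀}, 2 ≤ λ, then there exists a (κ,λ)-predictor. -/
noncomputable def omega1 : Ordinal := (Cardinal.aleph 1).ord

/-- C is a closed unbounded subset of omega1. -/
def IsClubBelowOmega1 (C : Set Ordinal) : Prop :=
  (∀ ξ ∈ C, ξ < omega1) ∧
  (∀ δ < omega1, ∃ ξ ∈ C, δ ≤ ξ) ∧
  (∀ δ < omega1, 0 < δ → (∀ η < δ, ∃ ξ ∈ C, η < ξ ∧ ξ < δ) → δ ∈ C)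

/-- Ψ is an (A,B)-predictor: Ψ ξ f depends only on f restricted to ξ, and for every
g : ω₁ → B there are f : ω₁ → A and a club C ⊆ ω₁ with g ξ = Ψ ξ f for all ξ ∈ C. -/
def IsPredictor {A B : Type} (Ψ : Ordinal → (Ordinal → A) → B) : Prop :=
  (∀ (ξ : Ordinal) (f f' : Ordinal → A), (∀ η < ξ, f η = f' η) → Ψ ξ f = Ψ ξ f') ∧
  ∀ g : Ordinal → B, ∃ f : Ordinal → A, ∃ C : Set Ordinal, IsClubBelowOmega1 C ∧
    ∀ ξ ∈ C, g ξ = Ψ ξ f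

/-- transfer the hypothesis `2 ^ ℵ₀ = 2 ^ ℵ₁` between universes -/
lemma two_power_transfer.{u, v} (h : (2 : Cardinal.{u}) ^ Cardinal.aleph0 = 2 ^ Cardinal.aleph 1) :
    (2 : Cardinal.{v}) ^ Cardinal.aleph0 = 2 ^ Cardinal.aleph 1 := by
  have h2 := congrArg Cardinal.lift.{v} h
  rw [Cardinal.lift_power, Cardinal.lift_power, Cardinal.lift_two, Cardinal.lift_aleph0,
    Cardinal.lift_aleph, Ordinal.lift_one] at h2
  apply Cardinal.lift_injective.{u}
  rw [Cardinal.lift_power, Cardinal.lift_power, Cardinal.lift_two, Cardinal.lift_aleph0,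
    Cardinal.lift_aleph, Ordinal.lift_one]
  exact h2

/-- the key embedding: functions from `ω₁` to `B` embed into functions from `ℕ` to `A`. -/
lemma pred_embed.{u} (h : (2 : Cardinal.{u}) ^ Cardinal.aleph0 = 2 ^ Cardinal.aleph 1)
    {A B : Type} (hA2 : 2 ≤ Cardinal.mk A) (hBc : Cardinal.mk B ≤ 2 ^ Cardinal.aleph0) :
    Nonempty ((omega1.{u}.ToType → B) ↪ (ℕ → A)) := by
  refine Cardinal.lift_mk_le'.mp ?_
  have h1 : Cardinal.lift.{0} (Cardinal.mk (omega1.{u}.ToType → B))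
      = Cardinal.lift.{u} (Cardinal.mk B) ^ Cardinal.aleph 1 := by
    rw [Cardinal.lift_id', Cardinal.mk_arrow, Cardinal.mk_toType]
    rw [show omega1.{u}.card = Cardinal.aleph 1 from Cardinal.card_ord _, Cardinal.lift_id']
  have h2 : Cardinal.lift.{u} (Cardinal.mk (ℕ → A))
      = Cardinal.lift.{u} (Cardinal.mk A) ^ Cardinal.aleph0.{u} := by
    rw [Cardinal.mk_arrow, Cardinal.mk_nat, Cardinal.lift_id, Cardinal.lift_id,
      Cardinal.lift_power, Cardinal.lift_aleph0]
  rw [h1, h2]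
  have hBc' : Cardinal.lift.{u} (Cardinal.mk B) ≤ 2 ^ Cardinal.aleph0.{u} := by
    calc Cardinal.lift.{u} (Cardinal.mk B) ≤ Cardinal.lift.{u} (2 ^ Cardinal.aleph0) :=
          Cardinal.lift_le.mpr hBc
      _ = 2 ^ Cardinal.aleph0.{u} := by
          rw [Cardinal.lift_power, Cardinal.lift_two, Cardinal.lift_aleph0]
  have hA2' : (2 : Cardinal.{u}) ≤ Cardinal.lift.{u} (Cardinal.mk A) := by
    calc (2 : Cardinal.{u}) = Cardinal.lift.{u} 2 := Cardinal.lift_two.symm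
      _ ≤ Cardinal.lift.{u} (Cardinal.mk A) := Cardinal.lift_le.mpr hA2
  calc Cardinal.lift.{u} (Cardinal.mk B) ^ Cardinal.aleph 1
      ≤ (2 ^ Cardinal.aleph0) ^ Cardinal.aleph 1 := Cardinal.power_le_power_right hBc'
    _ = 2 ^ (Cardinal.aleph0 * Cardinal.aleph 1) := by rw [← Cardinal.power_mul]
    _ = 2 ^ Cardinal.aleph 1 := by
        congr 1
        exact Cardinal.aleph0_mul_eq (by simp [Cardinal.aleph0_le_aleph])
    _ = 2 ^ Cardinal.aleph0 := h.symm
    _ ≤ Cardinal.lift.{u} (Cardinal.mk A) ^ Cardinal.aleph0 :=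
        Cardinal.power_le_power_right hA2'

/-- If 2^ℵ₀ = 2^ℵ₁ and 2 ≤ κ ≤ 2^ℵ₀, 2 ≤ λ ≤ 2^ℵ₀, then there is a
(κ,λ)-predictor (κ, λ realized as cardinalities of types A, B). -/
theorem stmt3 (h : (2 : Cardinal) ^ Cardinal.aleph0 = 2 ^ Cardinal.aleph 1)
    (A B : Type) (hA2 : 2 ≤ Cardinal.mk A) (hAc : Cardinal.mk A ≤ 2 ^ Cardinal.aleph0)
    (hB2 : 2 ≤ Cardinal.mk B) (hBc : Cardinal.mk B ≤ 2 ^ Cardinal.aleph0) :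
    ∃ Ψ : Ordinal → (Ordinal → A) → B, IsPredictor Ψ := by
  classical
  have hApos : (0 : Cardinal) < Cardinal.mk A := lt_of_lt_of_le (by norm_num) hA2
  have hBpos : (0 : Cardinal) < Cardinal.mk B := lt_of_lt_of_le (by norm_num) hB2
  have hAne : Nonempty A := Cardinal.mk_ne_zero_iff.mp hApos.ne'
  have hBne : Nonempty B := Cardinal.mk_ne_zero_iff.mp hBpos.ne'
  obtain ⟨e⟩ := pred_embed (two_power_transfer h) hA2 hBc
  have hω1 : Ordinal.omega0 < omega1 := by
    rw [← Cardinal.ord_aleph0, omega1]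
    exact Cardinal.ord_lt_ord.mpr (by simpa using Cardinal.aleph_lt_aleph.mpr zero_lt_one)
  let b₀ : B := Classical.arbitrary B
  let Φ : Ordinal → (ℕ → A) → B := fun ξ F =>
    if hξ : Ordinal.omega0 ≤ ξ ∧ ξ < omega1 ∧ ∃ G : omega1.ToType → B, F = e G then
      hξ.2.2.choose ((Ordinal.ToType.mk (o := omega1)) ⟨ξ, hξ.2.1⟩)
    else b₀
  let Ψ : Ordinal → (Ordinal → A) → B := fun ξ f => Φ ξ (fun n : ℕ => f (n : Ordinal))
  refine ⟨Ψ, ?_, ?_⟩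
  · intro ξ f f' hff
    by_cases hωξ : Ordinal.omega0 ≤ ξ
    · have hfn : (fun n : ℕ => f (n : Ordinal)) = (fun n : ℕ => f' (n : Ordinal)) := by
        funext n
        exact hff _ (lt_of_lt_of_le (Ordinal.nat_lt_omega0 n) hωξ)
      show Φ ξ (fun n : ℕ => f (n : Ordinal)) = Φ ξ (fun n : ℕ => f' (n : Ordinal))
      exact congrArg (Φ ξ) hfn
    · show Φ ξ (fun n : ℕ => f (n : Ordinal)) = Φ ξ (fun n : ℕ => f' (n : Ordinal))
      simp only [Φ]
      rw [dif_neg (fun hc => hωξ hc.1), dif_neg (fun hc => hωξ hc.1)]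
  · intro g
    set G : omega1.ToType → B :=
      fun t => g (((Ordinal.ToType.mk (o := omega1)).symm t : Set.Iio omega1) : Ordinal) with hG
    let f : Ordinal → A := fun ξ =>
      if hξ : ξ < Ordinal.omega0 then e G ((Ordinal.lt_omega0.mp hξ).choose)
      else Classical.arbitrary A
    have hfn : (fun n : ℕ => f (n : Ordinal)) = e G := by
      funext n
      have hn : (n : Ordinal) < Ordinal.omega0 := Ordinal.nat_lt_omega0 n
      have hch : ((n : Ordinal) = ((Ordinal.lt_omega0.mp hn).choose : Ordinal)) :=
        (Ordinal.lt_omega0.mp hn).choose_spec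
      have heq : (Ordinal.lt_omega0.mp hn).choose = n := by exact_mod_cast hch.symm
      simp only [f]
      rw [dif_pos hn, heq]
    refine ⟨f, {ξ | Ordinal.omega0 ≤ ξ ∧ ξ < omega1}, ⟨?_, ?_, ?_⟩, ?_⟩
    · exact fun ξ hξ => hξ.2
    · intro δ hδ
      exact ⟨max δ Ordinal.omega0, ⟨le_max_right _ _, max_lt hδ hω1⟩, le_max_left _ _⟩
    · intro δ hδ hδ0 hcl
      obtain ⟨ξ, hξC, _, hξδ⟩ := hcl 0 hδ0
      exact ⟨le_of_lt (lt_of_le_of_lt hξC.1 hξδ), hδ⟩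
    · intro ξ hξ
      have hcond : Ordinal.omega0 ≤ ξ ∧ ξ < omega1 ∧ ∃ G' : omega1.ToType → B,
          (fun n : ℕ => f (n : Ordinal)) = e G' := ⟨hξ.1, hξ.2, G, hfn⟩
      show g ξ = Φ ξ (fun n : ℕ => f (n : Ordinal))
      simp only [Φ]
      rw [dif_pos hcond]
      have hGG : hcond.2.2.choose = G := by
        apply e.injective
        rw [← hcond.2.2.choose_spec, hfn]
      rw [hGG, hG]
      simp
end

section
/- If there exists a (κ,λ)-predictor for some cardinals κ, λ with 2 ≤ κ, λ ≤ 2^{ℵ₀}, then there exists a (2^{ℵ₀}, 2^{ℵ₀})-predictor. -/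
universe u v

lemma omega1_isLimit : Order.IsSuccLimit (omega1 : Ordinal.{u}) :=
  Cardinal.isSuccLimit_ord (Cardinal.aleph0_le_aleph 1)

lemma omega1_pos : (0 : Ordinal.{u}) < omega1 :=
  omega1_isLimit.pos

lemma succ_lt_omega1 {η : Ordinal.{u}} (h : η < omega1) : η + 1 < omega1 := by
  rw [Ordinal.add_one_eq_succ]
  exact omega1_isLimit.succ_lt h

lemma lt_add_one_ord (η : Ordinal.{u}) : η < η + 1 := by
  rw [Ordinal.add_one_eq_succ]; exact Order.lt_succ η

/-- A countable intersection of clubs is a club. -/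
lemma isClub_iInter (C : ℕ → Set Ordinal.{u}) (h : ∀ n, IsClubBelowOmega1 (C n)) :
    IsClubBelowOmega1 (⋂ n, C n) := by
  classical
  have hc : ∀ (n : ℕ) (η : Ordinal.{u}), η < omega1 →
      ∃ ξ, ξ ∈ C n ∧ η < ξ ∧ ξ < omega1 := by
    intro n η hη
    obtain ⟨ξ, hξC, hξ⟩ := (h n).2.1 (η + 1) (succ_lt_omega1 hη)
    exact ⟨ξ, hξC, lt_of_lt_of_le (lt_add_one_ord η) hξ, (h n).1 ξ hξC⟩
  refine ⟨fun ξ hξ => (h 0).1 ξ (Set.mem_iInter.1 hξ 0), ?_, ?_⟩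
  · -- unbounded
    intro δ hδ
    set c : ℕ → Ordinal.{u} → Ordinal.{u} :=
      fun n η => if hη : η < omega1 then (hc n η hη).choose else 0 with hcdef
    have cspec : ∀ n η, (hη : η < omega1) →
        c n η ∈ C n ∧ η < c n η ∧ c n η < omega1 := by
      intro n η hη
      simp only [hcdef, dif_pos hη]
      exact (hc n η hη).choose_spec
    set x : ℕ → Ordinal.{u} := fun k => Nat.rec δ (fun k ih => c (Nat.unpair k).1 ih) k
      with hxdef
    have hxs : ∀ k, x (k + 1) = c (Nat.unpair k).1 (x k) := fun k => rfl
    have hlt : ∀ k, x k < omega1 := by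
      intro k
      induction k with
      | zero => exact hδ
      | succ k ih => rw [hxs]; exact (cspec _ _ ih).2.2
    have hmono : StrictMono x := strictMono_nat_of_lt_succ fun k => by
      rw [hxs]; exact (cspec _ _ (hlt k)).2.1
    have hmem : ∀ k, x (k + 1) ∈ C (Nat.unpair k).1 := fun k => by
      rw [hxs]; exact (cspec _ _ (hlt k)).1
    have hks : ∀ k, x k ≤ ⨆ k, x k := Ordinal.le_iSup x
    have hsup_lt : (⨆ k, x k) < omega1 := by
      refine Ordinal.iSup_lt_ord_lift ?_ hlt
      rw [show (omega1 : Ordinal.{u}).cof = Cardinal.aleph 1 from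
        Cardinal.isRegular_aleph_one.cof_eq, Cardinal.mk_nat, Cardinal.lift_aleph0]
      exact Cardinal.aleph0_lt_aleph_one
    have hpos : 0 < ⨆ k, x k :=
      lt_of_le_of_lt (zero_le (a := x 0)) (lt_of_lt_of_le (hmono (show 0 < 1 by norm_num)) (hks 1))
    refine ⟨⨆ k, x k, Set.mem_iInter.2 fun n => (h n).2.2 _ hsup_lt hpos ?_, hks 0⟩
    intro η hη
    obtain ⟨k₀, hk₀⟩ := Ordinal.lt_iSup_iff.1 hη
    set k := Nat.pair n k₀ with hkdef
    have hk : η < x k := lt_of_lt_of_le hk₀ (hmono.monotone (Nat.right_le_pair n k₀))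
    have hmemk : x (k + 1) ∈ C n := by
      have := hmem k
      rwa [hkdef, Nat.unpair_pair] at this
    exact ⟨x (k + 1), hmemk, lt_trans hk (hmono (lt_add_one k)),
      lt_of_lt_of_le (hmono (lt_add_one (k + 1))) (hks (k + 2))⟩
  · -- closed
    intro δ hδ hpos hlim
    refine Set.mem_iInter.2 fun n => (h n).2.2 δ hδ hpos fun η hη => ?_
    obtain ⟨ξ, hξ, h1, h2⟩ := hlim η hη
    exact ⟨ξ, Set.mem_iInter.1 hξ n, h1, h2⟩

lemma lift_omega1 : Ordinal.lift.{v} (omega1 : Ordinal.{u}) = omega1 := by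
  unfold omega1
  rw [Cardinal.lift_ord, Cardinal.lift_aleph, Ordinal.lift_one]

lemma lift_omega1' : Ordinal.lift.{u} (omega1 : Ordinal.{v}) =
    Ordinal.lift.{v} (omega1 : Ordinal.{u}) := by
  rw [lift_omega1, lift_omega1]

-- Transfer of countable ordinals between universes.
open Classical in
noncomputable def otr : Ordinal.{u} → Ordinal.{v} := fun ξ =>
  if h : ∃ ξ' : Ordinal.{v}, Ordinal.lift.{u} ξ' = Ordinal.lift.{v} ξ then h.choose else 0

lemma otr_spec {ξ : Ordinal.{u}} (hξ : ξ < omega1) :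
    Ordinal.lift.{u} (otr.{u, v} ξ) = Ordinal.lift.{v} ξ := by
  have h2 : Ordinal.lift.{v} ξ < Ordinal.lift.{u} (omega1 : Ordinal.{v}) := by
    rw [lift_omega1']
    exact Ordinal.lift_lt.2 hξ
  obtain ⟨ξ', _, hξ'⟩ := Ordinal.lt_lift_iff.1 h2
  have hex : ∃ ξ'' : Ordinal.{v}, Ordinal.lift.{u} ξ'' = Ordinal.lift.{v} ξ := ⟨ξ', hξ'⟩
  unfold otr
  rw [dif_pos hex]
  exact hex.choose_spec

lemma otr_lt {ξ : Ordinal.{u}} (hξ : ξ < omega1) : otr.{u, v} ξ < omega1 := by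
  have h1 : Ordinal.lift.{u} (otr.{u, v} ξ) < Ordinal.lift.{u} (omega1 : Ordinal.{v}) := by
    rw [otr_spec hξ, lift_omega1']
    exact Ordinal.lift_lt.2 hξ
  exact Ordinal.lift_lt.1 h1

lemma otr_otr {ξ : Ordinal.{u}} (hξ : ξ < omega1) : otr.{v, u} (otr.{u, v} ξ) = ξ := by
  have h1 : Ordinal.lift.{v} (otr.{v, u} (otr.{u, v} ξ)) = Ordinal.lift.{v} ξ := by
    rw [otr_spec (otr_lt hξ), otr_spec hξ]
  exact Ordinal.lift_inj.1 h1

lemma otr_lt_otr {ξ η : Ordinal.{u}} (hξ : ξ < omega1) (hη : η < omega1) :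
    otr.{u, v} ξ < otr.{u, v} η ↔ ξ < η := by
  rw [← Ordinal.lift_lt.{u}, otr_spec hξ, otr_spec hη, Ordinal.lift_lt]

lemma otr_zero : otr.{u, v} 0 = 0 := by
  have h1 : Ordinal.lift.{u} (otr.{u, v} (0 : Ordinal.{u})) = Ordinal.lift.{u} (0 : Ordinal.{v}) := by
    rw [otr_spec omega1_pos, Ordinal.lift_zero, Ordinal.lift_zero]
  exact Ordinal.lift_inj.1 h1

lemma otr_pos {ξ : Ordinal.{u}} (hξ : ξ < omega1) (h0 : 0 < ξ) : 0 < otr.{u, v} ξ := by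
  have := (otr_lt_otr (omega1_pos) hξ).2 h0
  rwa [otr_zero] at this

/-- Clubs transfer between universes. -/
lemma club_otr (C : Set Ordinal.{u}) (h : IsClubBelowOmega1 C) :
    IsClubBelowOmega1 {ξ : Ordinal.{v} | ξ < omega1 ∧ otr.{v, u} ξ ∈ C} := by
  refine ⟨fun ξ hξ => hξ.1, ?_, ?_⟩
  · intro δ hδ
    obtain ⟨ξ, hξC, hξle⟩ := h.2.1 (otr.{v, u} δ) (otr_lt hδ)
    have hξω : ξ < omega1 := h.1 ξ hξC
    refine ⟨otr.{u, v} ξ, ⟨otr_lt hξω, by rwa [otr_otr hξω]⟩, ?_⟩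
    rcases eq_or_lt_of_le hξle with heq | hlt
    · rw [← heq, otr_otr hδ]
    · exact le_of_lt (by rw [← otr_otr hδ]; exact (otr_lt_otr (otr_lt hδ) hξω).2 hlt)
  · intro δ hδ hpos hlim
    refine ⟨hδ, h.2.2 _ (otr_lt hδ) (otr_pos hδ hpos) ?_⟩
    intro η hη
    have hηω : η < omega1 := lt_trans hη (otr_lt hδ)
    have hηδ : otr.{u, v} η < δ := by
      rw [← otr_otr hδ]
      exact (otr_lt_otr hηω (otr_lt hδ)).2 hη
    obtain ⟨ζ, ⟨hζω, hζC⟩, h1, h2⟩ := hlim (otr.{u, v} η) hηδ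
    refine ⟨otr.{v, u} ζ, hζC, ?_, (otr_lt_otr hζω hδ).2 h2⟩
    rw [← otr_otr hηω]
    exact (otr_lt_otr (otr_lt hηω) hζω).2 h1

/-- A predictor transfers between universes of `Ordinal`. -/
lemma predictor_transfer {A B : Type} {Ψ : Ordinal.{u} → (Ordinal.{u} → A) → B}
    (a₀ : A) (h : IsPredictor Ψ) :
    ∃ Ψ' : Ordinal.{v} → (Ordinal.{v} → A) → B, IsPredictor Ψ' := by
  refine ⟨fun ξ f => Ψ (otr.{v, u} ξ) (fun η => if otr.{u, v} η < ξ then f (otr.{u, v} η) else a₀),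
    ?_, ?_⟩
  · intro ξ f f' hff'
    refine congrArg (Ψ (otr.{v, u} ξ)) ?_
    funext η
    by_cases hc : otr.{u, v} η < ξ
    · rw [if_pos hc, if_pos hc, hff' _ hc]
    · rw [if_neg hc, if_neg hc]
  · intro g
    obtain ⟨f₁, C₁, hC₁, hpr⟩ := h.2 (fun η => g (otr.{u, v} η))
    refine ⟨fun ξ => f₁ (otr.{v, u} ξ), {ξ : Ordinal.{v} | ξ < omega1 ∧ otr.{v, u} ξ ∈ C₁},
      club_otr C₁ hC₁, ?_⟩
    rintro ξ ⟨hξω, hξC⟩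
    have hsω : otr.{v, u} ξ < omega1 := otr_lt hξω
    have heq : Ψ (otr.{v, u} ξ)
        (fun η => if otr.{u, v} η < ξ then f₁ (otr.{v, u} (otr.{u, v} η)) else a₀)
        = Ψ (otr.{v, u} ξ) f₁ := by
      apply h.1
      intro η hη
      have hηω : η < omega1 := lt_trans hη hsω
      have hc : otr.{u, v} η < ξ := by
        rw [← otr_otr hξω]
        exact (otr_lt_otr hηω hsω).2 hη
      rw [if_pos hc, otr_otr hηω]
    calc g ξ = g (otr.{u, v} (otr.{v, u} ξ)) := by rw [otr_otr hξω]
      _ = Ψ (otr.{v, u} ξ) f₁ := hpr _ hξC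
      _ = _ := heq.symm

/-- Same-universe version of the main theorem. -/
lemma stmt4_aux
    (h : ∃ (A B : Type) (Ψ : Ordinal.{u} → (Ordinal.{u} → A) → B),
      2 ≤ Cardinal.mk A ∧ Cardinal.mk A ≤ 2 ^ Cardinal.aleph0 ∧
      2 ≤ Cardinal.mk B ∧ Cardinal.mk B ≤ 2 ^ Cardinal.aleph0 ∧ IsPredictor Ψ) :
    ∃ Ψ : Ordinal.{u} → (Ordinal.{u} → (ℕ → Bool)) → (ℕ → Bool), IsPredictor Ψ := by
  classical
  obtain ⟨A, B, Ψ, hA2, hAle, hB2, _hBle, hrest, hpred⟩ := h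
  have hAne : Nonempty A := by
    rw [← Cardinal.mk_ne_zero_iff]
    intro h0
    rw [h0] at hA2
    exact absurd hA2 (by norm_num)
  have hANne : Nonempty (ℕ → A) := ⟨fun _ => hAne.some⟩
  -- embed Bool into B
  have hBoolB : Cardinal.mk Bool ≤ Cardinal.mk B := by rw [Cardinal.mk_bool]; exact hB2
  obtain ⟨e⟩ := (Cardinal.le_def _ _).1 hBoolB
  -- embed ℕ → A into ℕ → Bool
  have hcard : Cardinal.mk (ℕ → A) ≤ Cardinal.mk (ℕ → Bool) := by
    rw [Cardinal.mk_arrow, Cardinal.mk_arrow, Cardinal.mk_bool, Cardinal.mk_nat,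
      Cardinal.lift_id, Cardinal.lift_id, Cardinal.lift_id]
    calc Cardinal.mk A ^ Cardinal.aleph0
        ≤ (2 ^ Cardinal.aleph0) ^ Cardinal.aleph0 := Cardinal.power_le_power_right hAle
      _ = 2 ^ (Cardinal.aleph0 * Cardinal.aleph0) := (Cardinal.power_mul ..).symm
      _ = 2 ^ Cardinal.aleph0 := by rw [Cardinal.aleph0_mul_aleph0]
  obtain ⟨j⟩ := (Cardinal.le_def _ _).1 hcard
  have hre : ∀ b : Bool, Function.invFun e (e b) = b :=
    Function.leftInverse_invFun e.injective
  have hrj : ∀ a : ℕ → A, Function.invFun j (j a) = a :=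
    Function.leftInverse_invFun j.injective
  refine ⟨fun ξ f => fun n => Function.invFun e (Ψ ξ (fun η => Function.invFun j (f η) n)),
    ?_, ?_⟩
  · intro ξ f f' hff'
    funext n
    show Function.invFun e (Ψ ξ (fun η => Function.invFun j (f η) n))
        = Function.invFun e (Ψ ξ (fun η => Function.invFun j (f' η) n))
    exact congrArg _ (hrest ξ _ _ fun η hη => by rw [hff' η hη])
  · intro g
    choose F Cf hclub hpr using fun n => hpred (fun ξ => e (g ξ n))
    refine ⟨fun η => j (fun n => F n η), ⋂ n, Cf n, isClub_iInter Cf hclub, ?_⟩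
    intro ξ hξ
    funext n
    show g ξ n = Function.invFun e (Ψ ξ (fun η => Function.invFun j (j fun n => F n η) n))
    have h1 : (fun η => Function.invFun j (j fun n => F n η) n) = F n := by
      funext η; rw [hrj]
    rw [h1, ← hpr n ξ (Set.mem_iInter.1 hξ n), hre]

/-- If there is a (κ,λ)-predictor for some cardinals 2 ≤ κ, λ ≤ 2^ℵ₀, then
there is a (2^ℵ₀, 2^ℵ₀)-predictor (2^ℵ₀ realized by the type ℕ → Bool). -/
theorem stmt4
    (h : ∃ (A B : Type) (Ψ : Ordinal → (Ordinal → A) → B),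
      2 ≤ Cardinal.mk A ∧ Cardinal.mk A ≤ 2 ^ Cardinal.aleph0 ∧
      2 ≤ Cardinal.mk B ∧ Cardinal.mk B ≤ 2 ^ Cardinal.aleph0 ∧ IsPredictor Ψ) :
    ∃ Ψ : Ordinal → (Ordinal → (ℕ → Bool)) → (ℕ → Bool), IsPredictor Ψ := by
  obtain ⟨Ψ₂, hΨ₂⟩ := stmt4_aux h
  exact predictor_transfer (fun _ => false) hΨ₂
end

section
/- If there exists a (2^{ℵ₀}, 2^{ℵ₀})-predictor, then 2^{ℵ₀} = 2^{ℵ₁}. -/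
noncomputable section

namespace Stmt5

open Cardinal Ordinal Set Function Classical

/-- The "reals". -/
abbrev R : Type := ℕ → Bool

lemma mkR : #R = 2 ^ ℵ₀ := by
  rw [← Cardinal.mk_bool, ← Cardinal.mk_nat, Cardinal.power_def]

lemma aleph_one_eq_succ : (ℵ₁ : Cardinal.{0}) = Order.succ (ℵ₀ : Cardinal.{0}) := by
  have h1 : (1 : Ordinal.{0}) = Order.succ 0 := by
    rw [← Ordinal.add_one_eq_succ, zero_add]
  rw [show (ℵ₁ : Cardinal.{0}) = Cardinal.aleph 1 from rfl, h1, Cardinal.aleph_succ,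
    Cardinal.aleph_zero]

lemma aleph1_le_mkR : (ℵ₁ : Cardinal.{0}) ≤ #R := by
  rw [mkR, aleph_one_eq_succ]
  exact Order.succ_le_of_lt (Cardinal.cantor _)

lemma omega1_isLimit : Order.IsSuccLimit omega1.{0} :=
  Cardinal.isSuccLimit_ord (Cardinal.aleph0_le_aleph 1)

lemma omega1_pos : (0 : Ordinal.{0}) < omega1 := omega1_isLimit.pos

lemma succ_lt_omega1 {o : Ordinal.{0}} (h : o < omega1) : o + 1 < omega1 := by
  rw [Ordinal.add_one_eq_succ]; exact omega1_isLimit.succ_lt h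

lemma card_lt_of_lt_omega1 {o : Ordinal.{0}} (h : o < omega1) : o.card < ℵ₁ :=
  Cardinal.lt_ord.mp h

lemma card_le_aleph0_of_lt_omega1 {o : Ordinal.{0}} (h : o < omega1) : o.card ≤ ℵ₀ := by
  have := card_lt_of_lt_omega1 h
  rwa [aleph_one_eq_succ, Order.lt_succ_iff] at this

lemma cof_omega1 : omega1.{0}.cof = ℵ₁ := Cardinal.isRegular_aleph_one.cof_eq

lemma bsup_lt_omega1 {o : Ordinal.{0}} (ho : o < omega1) (f : ∀ a < o, Ordinal.{0})
    (hf : ∀ i hi, f i hi < omega1) : Ordinal.bsup o f < omega1 :=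
  Ordinal.bsup_lt_ord (by rw [cof_omega1]; exact card_lt_of_lt_omega1 ho) hf

/-! ### Coding devices -/

lemma mk_RRR : #(R × R × R) = #R := by
  simp only [Cardinal.mk_prod, Cardinal.lift_id, mkR, ← Cardinal.power_add]
  rw [Cardinal.aleph0_add_aleph0, Cardinal.aleph0_add_aleph0]

/-- Coding of triples of reals by reals. -/
def e3 : (R × R × R) ≃ R := (Cardinal.eq.mp mk_RRR).some

lemma mk_toType_omega1 : #(omega1.{0}.ToType) = ℵ₁ := by
  rw [Cardinal.mk_toType, omega1, Cardinal.card_ord]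

instance : Nonempty omega1.{0}.ToType :=
  Ordinal.nonempty_toType_iff.mpr omega1_pos.ne'

/-- Coding of countable ordinals by reals. -/
def ordEmb : omega1.{0}.ToType ↪ R :=
  ((Cardinal.le_def _ _).mp (by rw [mk_toType_omega1]; exact aleph1_le_mkR)).some

def decOrd : R → omega1.{0}.ToType := Function.invFun ordEmb

lemma decOrd_ordEmb (x : omega1.{0}.ToType) : decOrd (ordEmb x) = x :=
  Function.leftInverse_invFun ordEmb.injective x

lemma mk_chunk_le {o : Ordinal.{0}} (ho : o < omega1) : #(o.ToType → R) ≤ #R := by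
  rw [← Cardinal.power_def, Cardinal.mk_toType, mkR, ← Cardinal.power_mul]
  apply Cardinal.power_le_power_left (by norm_num)
  calc ℵ₀ * o.card ≤ ℵ₀ * ℵ₀ :=
        mul_le_mul_right (card_le_aleph0_of_lt_omega1 ho) _
    _ = ℵ₀ := Cardinal.aleph0_mul_aleph0

/-- Coding of countable sequences of reals by reals. -/
def chunkE {o : Ordinal.{0}} (ho : o < omega1) : (o.ToType → R) ↪ R :=
  ((Cardinal.le_def _ _).mp (mk_chunk_le ho)).some

def chunk (o : Ordinal.{0}) : (o.ToType → R) → R :=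
  if ho : o < omega1 then chunkE ho else fun _ => default

def dechunk (o : Ordinal.{0}) : R → (o.ToType → R) := Function.invFun (chunk o)

lemma chunk_injective {o : Ordinal.{0}} (ho : o < omega1) : Function.Injective (chunk o) := by
  rw [chunk, dif_pos ho]; exact (chunkE ho).injective

lemma dechunk_chunk {o : Ordinal.{0}} (ho : o < omega1) (x : o.ToType → R) :
    dechunk o (chunk o x) = x :=
  Function.leftInverse_invFun (chunk_injective ho) x

/-- Restriction of `f` below `o`, as a function on `o.ToType`. -/
def restr (f : Ordinal.{0} → R) (o : Ordinal.{0}) : o.ToType → R :=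
  fun a => f ((Ordinal.ToType.mk (o := o)).symm a).1

lemma restr_apply (f : Ordinal.{0} → R) {o ξ : Ordinal.{0}} (h : ξ < o) :
    restr f o ((Ordinal.ToType.mk (o := o)) ⟨ξ, h⟩) = f ξ := by
  rw [restr, OrderIso.symm_apply_apply]

/-- Decode a coded sequence and evaluate it at position `η`. -/
def evalAt (o : Ordinal.{0}) (v : R) (η : Ordinal.{0}) : R :=
  if h : η < o then dechunk o v ((Ordinal.ToType.mk (o := o)) ⟨η, h⟩) else default

lemma evalAt_chunk_restr {o η : Ordinal.{0}} (ho : o < omega1) (hη : η < o)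
    (f : Ordinal.{0} → R) : evalAt o (chunk o (restr f o)) η = f η := by
  rw [evalAt, dif_pos hη, dechunk_chunk ho, restr_apply]

/-- The function coding all proper initial segments of `h`. -/
def Gfun (h : Ordinal.{0} → R) : Ordinal.{0} → R :=
  fun ξ => chunk (ξ + 1) (restr h (ξ + 1))

/-! ### Increasing enumeration of a club -/

def denum (C : Set Ordinal.{0}) : Ordinal.{0} → Ordinal.{0} :=
  WellFounded.fix Ordinal.lt_wf fun i rec =>
    sInf {ξ | ξ ∈ C ∧ ∀ j, ∀ hj : j < i, rec j hj < ξ}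

lemma denum_def (C : Set Ordinal.{0}) (i : Ordinal.{0}) :
    denum C i = sInf {ξ | ξ ∈ C ∧ ∀ j, ∀ _ : j < i, denum C j < ξ} := by
  rw [denum, WellFounded.fix_eq]

lemma denum_spec {C : Set Ordinal.{0}} (hC : IsClubBelowOmega1 C) :
    ∀ i, i < omega1 → denum C i ∈ C ∧ ∀ j, j < i → denum C j < denum C i := by
  intro i
  induction i using Ordinal.induction with
  | h i IH =>
    intro hi
    have hbound : ∀ j, j < i → denum C j < omega1 := fun j hj =>
      hC.1 _ (IH j hj (hj.trans hi)).1
    have hB : Ordinal.bsup i (fun j _ => denum C j + 1) < omega1 :=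
      bsup_lt_omega1 hi _ fun j hj => succ_lt_omega1 (hbound j hj)
    obtain ⟨ξ, hξC, hξ⟩ := hC.2.1 _ hB
    have hne : {ξ | ξ ∈ C ∧ ∀ j, ∀ _ : j < i, denum C j < ξ}.Nonempty := by
      refine ⟨ξ, hξC, fun j hj => ?_⟩
      have h1 : denum C j + 1 ≤ Ordinal.bsup i (fun j _ => denum C j + 1) :=
        Ordinal.le_bsup _ j hj
      have h2 : denum C j < denum C j + 1 := by
        rw [Ordinal.add_one_eq_succ]; exact Order.lt_succ _
      exact h2.trans_le (h1.trans hξ)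
    have hmem := csInf_mem hne
    rw [← denum_def] at hmem
    exact ⟨hmem.1, fun j hj => hmem.2 j hj⟩

lemma denum_mem {C : Set Ordinal.{0}} (hC : IsClubBelowOmega1 C) {i : Ordinal.{0}}
    (hi : i < omega1) : denum C i ∈ C := (denum_spec hC i hi).1

lemma denum_lt_omega1 {C : Set Ordinal.{0}} (hC : IsClubBelowOmega1 C) {i : Ordinal.{0}}
    (hi : i < omega1) : denum C i < omega1 := hC.1 _ (denum_mem hC hi)

lemma denum_mono {C : Set Ordinal.{0}} (hC : IsClubBelowOmega1 C) {j i : Ordinal.{0}}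
    (hji : j < i) (hi : i < omega1) : denum C j < denum C i := (denum_spec hC i hi).2 j hji

lemma le_denum {C : Set Ordinal.{0}} (hC : IsClubBelowOmega1 C) :
    ∀ i, i < omega1 → i ≤ denum C i := by
  intro i
  induction i using Ordinal.induction with
  | h i IH =>
    intro hi
    by_contra hcon
    push_neg at hcon
    have h1 := IH _ hcon (hcon.trans hi)
    have h2 := denum_mono hC hcon hi
    exact absurd (h1.trans_lt h2) (lt_irrefl _)

/-! ### The derived perfect predictor -/

/-- Decode the ordinal stored in the value `t i`. -/
def decOf (t : Ordinal.{0} → R) (i : Ordinal.{0}) : Ordinal.{0} :=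
  ((Ordinal.ToType.mk (o := omega1)).symm (decOrd (e3.symm (t i)).1)).1

def thetaCore (Ψ : Ordinal.{0} → (Ordinal.{0} → R) → R) (ξ : Ordinal.{0})
    (t : Ordinal.{0} → R) : R :=
  if ξ = 0 then default
  else if hs : ∃ i, ξ = i + 1 then (e3.symm (t hs.choose)).2.2
  else
    evalAt (Ordinal.bsup ξ (fun i _ => decOf t i) + 1)
      (Ψ (Ordinal.bsup ξ (fun i _ => decOf t i))
        (fun η => if hex : ∃ i, i < ξ ∧ η < decOf t i then
            evalAt (decOf t hex.choose) ((e3.symm (t hex.choose)).2.1) η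
          else default))
      ξ

def theta (Ψ : Ordinal.{0} → (Ordinal.{0} → R) → R) (ξ : Ordinal.{0})
    (t : Ordinal.{0} → R) : R :=
  thetaCore Ψ ξ fun i => if i < ξ then t i else default

lemma theta_coh {Ψ : Ordinal.{0} → (Ordinal.{0} → R) → R} {ξ : Ordinal.{0}}
    {t t' : Ordinal.{0} → R} (h : ∀ η, η < ξ → t η = t' η) :
    theta Ψ ξ t = theta Ψ ξ t' := by
  unfold theta
  exact congrArg (thetaCore Ψ ξ) (funext fun i => by
    by_cases hi : i < ξ
    · rw [if_pos hi, if_pos hi, h i hi]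
    · rw [if_neg hi, if_neg hi])

/-- The re-packed witness. -/
def pack (h f : Ordinal.{0} → R) (C : Set Ordinal.{0}) (hC : IsClubBelowOmega1 C) :
    Ordinal.{0} → R := fun i =>
  if hi : i < omega1 then
    e3 (ordEmb ((Ordinal.ToType.mk (o := omega1)) ⟨denum C i, denum_lt_omega1 hC hi⟩),
        chunk (denum C i) (restr f (denum C i)),
        h (i + 1))
  else default

lemma perfect (Ψ : Ordinal.{0} → (Ordinal.{0} → R) → R) (hΨ : IsPredictor Ψ)
    (h : Ordinal.{0} → R) :
    ∃ e : Ordinal.{0} → R, ∀ γ, 0 < γ → γ < omega1 → theta Ψ γ e = h γ := by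
  obtain ⟨f, C, hC, hCorr⟩ := hΨ.2 (Gfun h)
  refine ⟨pack h f C hC, fun γ hγ0 hγ1 => ?_⟩
  rcases Ordinal.zero_or_succ_or_isSuccLimit γ with rfl | ⟨i, rfl⟩ | hlim
  · exact absurd hγ0 (lt_irrefl 0)
  · -- successor case
    have hiγ : i < Order.succ i := Order.lt_succ i
    have hi1 : i < omega1 := hiγ.trans hγ1
    have hne0 : (Order.succ i : Ordinal.{0}) ≠ 0 := Ordinal.succ_ne_zero i
    have hs : ∃ j : Ordinal.{0}, Order.succ i = j + 1 := ⟨i, (Ordinal.add_one_eq_succ i).symm⟩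
    have hch : hs.choose = i := by
      have hspec := hs.choose_spec
      rw [Ordinal.add_one_eq_succ] at hspec
      exact (Order.succ_injective hspec.symm)
    simp only [theta, thetaCore, if_neg hne0, dif_pos hs, hch, if_pos hiγ]
    simp only [pack, dif_pos hi1, Equiv.symm_apply_apply]
    rw [Ordinal.add_one_eq_succ]
  · -- limit case
    have hne0 : γ ≠ 0 := hγ0.ne'
    have hns : ¬ ∃ j : Ordinal.{0}, γ = j + 1 := by
      rintro ⟨j, rfl⟩
      rw [Ordinal.add_one_eq_succ] at hlim
      exact lt_irrefl _ (hlim.succ_lt (Order.lt_succ j))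
    simp only [theta, thetaCore, if_neg hne0, dif_neg hns]
    have hkey : ∀ i, i < γ →
        decOf (fun i => if i < γ then pack h f C hC i else default) i = denum C i := by
      intro i hi
      have hiΛ : i < omega1 := hi.trans hγ1
      simp only [decOf, if_pos hi, pack, dif_pos hiΛ, Equiv.symm_apply_apply]
      rw [decOrd_ordEmb, OrderIso.symm_apply_apply]
    have hbeq : Ordinal.bsup γ (fun i _ => decOf
          (fun i => if i < γ then pack h f C hC i else default) i) =
        Ordinal.bsup γ (fun i _ => denum C i) := by
      congr 1
      funext i hi
      exact hkey i hi
    rw [hbeq]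
    have hδΛ : Ordinal.bsup γ (fun i _ => denum C i) < omega1 :=
      bsup_lt_omega1 hγ1 _ fun i hi => denum_lt_omega1 hC (hi.trans hγ1)
    have hgt : ∀ i, i < γ → denum C i < Ordinal.bsup γ (fun i _ => denum C i) := by
      intro i hi
      have hi1 : i + 1 < γ := by rw [Ordinal.add_one_eq_succ]; exact hlim.succ_lt hi
      have hmono : denum C i < denum C (i + 1) := by
        apply denum_mono hC _ (hi1.trans hγ1)
        rw [Ordinal.add_one_eq_succ]; exact Order.lt_succ i
      exact hmono.trans_le (Ordinal.le_bsup _ (i + 1) hi1)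
    have hδpos : 0 < Ordinal.bsup γ (fun i _ => denum C i) :=
      lt_of_le_of_lt zero_le (hgt 0 hlim.pos)
    have hδC : Ordinal.bsup γ (fun i _ => denum C i) ∈ C := by
      apply hC.2.2 _ hδΛ hδpos
      intro η hη
      obtain ⟨i, hi, hηi⟩ := (Ordinal.lt_bsup _).mp hη
      exact ⟨denum C i, denum_mem hC (hi.trans hγ1), hηi, hgt i hi⟩
    have hγδ : γ ≤ Ordinal.bsup γ (fun i _ => denum C i) := by
      by_contra hcon
      push_neg at hcon
      exact absurd (hgt _ hcon)
        (not_lt.mpr (le_denum hC _ hδΛ))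
    have hfa : ∀ η, η < Ordinal.bsup γ (fun i _ => denum C i) →
        (fun η => if hex : ∃ i, i < γ ∧ η < decOf
              (fun i => if i < γ then pack h f C hC i else default) i then
            evalAt (decOf (fun i => if i < γ then pack h f C hC i else default) hex.choose)
              ((e3.symm ((fun i => if i < γ then pack h f C hC i else default)
                hex.choose)).2.1) η
          else default) η = f η := by
      intro η hη
      obtain ⟨i, hi, hηi⟩ := (Ordinal.lt_bsup _).mp hη
      have hex : ∃ i, i < γ ∧ η < decOf
          (fun i => if i < γ then pack h f C hC i else default) i :=
        ⟨i, hi, by rw [hkey i hi]; exact hηi⟩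
      simp only [dif_pos hex]
      obtain ⟨hiγ2, hηd⟩ := hex.choose_spec
      have hkc := hkey hex.choose hiγ2
      have hiΛ : hex.choose < omega1 := hiγ2.trans hγ1
      have hdΛ : denum C hex.choose < omega1 := denum_lt_omega1 hC hiΛ
      have h2 : (e3.symm ((fun i => if i < γ then pack h f C hC i else default)
          hex.choose)).2.1 = chunk (denum C hex.choose) (restr f (denum C hex.choose)) := by
        simp only [if_pos hiγ2]
        rw [pack, dif_pos hiΛ, Equiv.symm_apply_apply]
      rw [hkc] at hηd ⊢
      rw [h2]
      exact evalAt_chunk_restr hdΛ hηd f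
    have hψ := hΨ.1 (Ordinal.bsup γ (fun i _ => denum C i)) _ f hfa
    rw [hψ, ← hCorr _ hδC]
    simp only [Gfun]
    exact evalAt_chunk_restr (succ_lt_omega1 hδΛ)
      (by rw [Ordinal.add_one_eq_succ]; exact Order.lt_succ_iff.mpr hγδ) h

/-! ### The bootstrap -/

def W (Ψ : Ordinal.{0} → (Ordinal.{0} → R) → R) (hΨ : IsPredictor Ψ) :
    (Ordinal.{0} → R) → (Ordinal.{0} → R) := fun h => (perfect Ψ hΨ h).choose

lemma W_spec (Ψ : Ordinal.{0} → (Ordinal.{0} → R) → R) (hΨ : IsPredictor Ψ)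
    (h : Ordinal.{0} → R) : ∀ γ, 0 < γ → γ < omega1 → theta Ψ γ (W Ψ hΨ h) = h γ :=
  (perfect Ψ hΨ h).choose_spec

def tower (Ψ : Ordinal.{0} → (Ordinal.{0} → R) → R) (hΨ : IsPredictor Ψ)
    (h : Ordinal.{0} → R) : ℕ → (Ordinal.{0} → R)
  | 0 => W Ψ hΨ h
  | n + 1 => W Ψ hΨ (tower Ψ hΨ h n)

def recon (Ψ : Ordinal.{0} → (Ordinal.{0} → R) → R) (s : ℕ → R) :
    Ordinal.{0} → ℕ → R :=
  WellFounded.fix Ordinal.lt_wf fun γ rec =>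
    if γ = 0 then s
    else fun n => theta Ψ γ fun η => if hη : η < γ then rec η hη (n + 1) else default

lemma recon_def (Ψ : Ordinal.{0} → (Ordinal.{0} → R) → R) (s : ℕ → R) (γ : Ordinal.{0}) :
    recon Ψ s γ = if γ = 0 then s
      else fun n => theta Ψ γ fun η => if hη : η < γ then recon Ψ s η (n + 1) else default := by
  rw [recon, WellFounded.fix_eq]

lemma recon_spec (Ψ : Ordinal.{0} → (Ordinal.{0} → R) → R) (hΨ : IsPredictor Ψ)
    (h : Ordinal.{0} → R) :
    ∀ γ, γ < omega1 → ∀ n, recon Ψ (fun n => tower Ψ hΨ h n 0) γ n = tower Ψ hΨ h n γ := by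
  intro γ
  induction γ using Ordinal.induction with
  | h γ IH =>
    intro hγ n
    by_cases h0 : γ = 0
    · subst h0
      rw [recon_def, if_pos rfl]
    · rw [recon_def, if_neg h0]
      have hcoh : theta Ψ γ (fun η => if hη : η < γ then
            recon Ψ (fun n => tower Ψ hΨ h n 0) η (n + 1) else default) =
          theta Ψ γ (tower Ψ hΨ h (n + 1)) :=
        theta_coh fun η hη => by rw [dif_pos hη, IH η hη (hη.trans hγ) (n + 1)]
      rw [hcoh]
      exact W_spec Ψ hΨ (tower Ψ hΨ h n) γ (pos_iff_ne_zero.mpr h0) hγ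

/-- Reconstruction of `h` itself from the seed. -/
def reconTop (Ψ : Ordinal.{0} → (Ordinal.{0} → R) → R) (a : R) (s : ℕ → R)
    (γ : Ordinal.{0}) : R :=
  if γ = 0 then a else theta Ψ γ fun η => if η < γ then recon Ψ s η 0 else default

lemma reconTop_spec (Ψ : Ordinal.{0} → (Ordinal.{0} → R) → R) (hΨ : IsPredictor Ψ)
    (h : Ordinal.{0} → R) :
    ∀ γ, γ < omega1 → reconTop Ψ (h 0) (fun n => tower Ψ hΨ h n 0) γ = h γ := by
  intro γ hγ
  by_cases h0 : γ = 0
  · subst h0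
    rw [reconTop, if_pos rfl]
  · rw [reconTop, if_neg h0]
    have hcoh : theta Ψ γ (fun η => if η < γ then
          recon Ψ (fun n => tower Ψ hΨ h n 0) η 0 else default) =
        theta Ψ γ (tower Ψ hΨ h 0) :=
      theta_coh fun η hη => by rw [if_pos hη, recon_spec Ψ hΨ h η (hη.trans hγ) 0]
    rw [hcoh]
    exact W_spec Ψ hΨ h γ (pos_iff_ne_zero.mpr h0) hγ

/-! ### The injection -/

def toH (x : omega1.{0}.ToType → Bool) : Ordinal.{0} → R := fun ξ =>
  if hξ : ξ < omega1 then (fun _ => x ((Ordinal.ToType.mk (o := omega1)) ⟨ξ, hξ⟩)) else default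

def J (Ψ : Ordinal.{0} → (Ordinal.{0} → R) → R) (hΨ : IsPredictor Ψ)
    (x : omega1.{0}.ToType → Bool) : R × (ℕ → R) :=
  (toH x 0, fun n => tower Ψ hΨ (toH x) n 0)

lemma J_inj (Ψ : Ordinal.{0} → (Ordinal.{0} → R) → R) (hΨ : IsPredictor Ψ) :
    Function.Injective (J Ψ hΨ) := by
  intro x y hxy
  have h1 : toH x 0 = toH y 0 := congrArg Prod.fst hxy
  have h2 : (fun n => tower Ψ hΨ (toH x) n 0) = (fun n => tower Ψ hΨ (toH y) n 0) :=
    congrArg Prod.snd hxy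
  have hAll : ∀ ξ, ξ < omega1.{0} → toH x ξ = toH y ξ := by
    intro ξ hξ
    have hx := reconTop_spec Ψ hΨ (toH x) ξ hξ
    have hy := reconTop_spec Ψ hΨ (toH y) ξ hξ
    rw [← hx, ← hy, reconTop, reconTop, h1, h2]
  funext a
  have ha : ((Ordinal.ToType.mk (o := omega1.{0})).symm a).1 < omega1 :=
    ((Ordinal.ToType.mk (o := omega1.{0})).symm a).2
  have hval := hAll _ ha
  rw [toH, toH, dif_pos ha, dif_pos ha] at hval
  have hsub : (⟨((Ordinal.ToType.mk (o := omega1.{0})).symm a).1, ha⟩ : Set.Iio omega1.{0}) =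
      (Ordinal.ToType.mk (o := omega1.{0})).symm a := rfl
  rw [hsub, OrderIso.apply_symm_apply] at hval
  exact congrFun hval 0

/-! ### Core cardinal computation -/

lemma core (Ψ : Ordinal.{0} → (Ordinal.{0} → R) → R) (hΨ : IsPredictor Ψ) :
    (2 : Cardinal.{0}) ^ Cardinal.aleph0 = 2 ^ Cardinal.aleph 1 := by
  apply le_antisymm
  · exact Cardinal.power_le_power_left (by norm_num) (Cardinal.aleph0_le_aleph 1)
  · have h1 : #(omega1.{0}.ToType → Bool) = (2 : Cardinal.{0}) ^ (ℵ₁ : Cardinal.{0}) := by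
      rw [← Cardinal.power_def, Cardinal.mk_bool, mk_toType_omega1]
    have h2 : #(R × (ℕ → R)) = (2 : Cardinal.{0}) ^ (ℵ₀ : Cardinal.{0}) := by
      have e1 : #(ℕ → R) = #R ^ (ℵ₀ : Cardinal.{0}) := by
        rw [← Cardinal.power_def, Cardinal.mk_nat]
      rw [Cardinal.mk_prod, Cardinal.lift_id, Cardinal.lift_id, e1, mkR,
        ← Cardinal.power_mul, ← Cardinal.power_add, Cardinal.aleph0_mul_aleph0,
        Cardinal.aleph0_add_aleph0]
    calc (2 : Cardinal.{0}) ^ Cardinal.aleph 1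
        = #(omega1.{0}.ToType → Bool) := h1.symm
      _ ≤ #(R × (ℕ → R)) := Cardinal.mk_le_of_injective (J_inj Ψ hΨ)
      _ = 2 ^ Cardinal.aleph0 := h2

/-! ### Universe adjustments -/

universe u v

lemma lift_omega1 : Ordinal.lift.{u} omega1.{0} = omega1.{u} := by
  rw [omega1, omega1, Cardinal.lift_ord, Cardinal.lift_aleph, Ordinal.lift_one]

lemma down (Ψ : Ordinal.{u} → (Ordinal.{u} → R) → R) (hΨ : IsPredictor Ψ) :
    ∃ Ψ₀ : Ordinal.{0} → (Ordinal.{0} → R) → R, IsPredictor Ψ₀ := by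
  refine ⟨fun ξ f => Ψ (Ordinal.lift.{u} ξ)
    (fun η => if hη : ∃ η₀ : Ordinal.{0}, Ordinal.lift.{u} η₀ = η then f hη.choose
      else default), ?_, ?_⟩
  · intro ξ f f' hff
    apply hΨ.1
    intro η hη
    by_cases hex : ∃ η₀ : Ordinal.{0}, Ordinal.lift.{u} η₀ = η
    · rw [dif_pos hex, dif_pos hex]
      apply hff
      have hspec := hex.choose_spec
      rw [← hspec] at hη
      exact Ordinal.lift_lt.mp hη
    · rw [dif_neg hex, dif_neg hex]
  · intro g₀
    obtain ⟨f, C, hC, hCorr⟩ := hΨ.2 (fun η =>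
      if hη : ∃ η₀ : Ordinal.{0}, Ordinal.lift.{u} η₀ = η then g₀ hη.choose else default)
    refine ⟨fun η₀ => f (Ordinal.lift.{u} η₀), {ξ₀ | Ordinal.lift.{u} ξ₀ ∈ C},
      ⟨?_, ?_, ?_⟩, ?_⟩
    · intro ξ₀ hξ₀
      have hb := hC.1 _ hξ₀
      rw [← lift_omega1] at hb
      exact Ordinal.lift_lt.mp hb
    · intro δ₀ hδ₀
      have hδ : Ordinal.lift.{u} δ₀ < omega1.{u} := by
        rw [← lift_omega1]; exact Ordinal.lift_lt.mpr hδ₀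
      obtain ⟨ξ, hξC, hξ⟩ := hC.2.1 _ hδ
      have hξΛ : ξ < omega1.{u} := hC.1 _ hξC
      rw [← lift_omega1] at hξΛ
      obtain ⟨ξ₀, rfl⟩ := Ordinal.mem_range_lift_of_le hξΛ.le
      exact ⟨ξ₀, hξC, Ordinal.lift_le.mp hξ⟩
    · intro δ₀ hδ₀ hpos hacc
      show Ordinal.lift.{u} δ₀ ∈ C
      apply hC.2.2
      · rw [← lift_omega1]; exact Ordinal.lift_lt.mpr hδ₀
      · have hz : Ordinal.lift.{u} 0 < Ordinal.lift.{u} δ₀ := Ordinal.lift_lt.mpr hpos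
        rwa [Ordinal.lift_zero] at hz
      · intro η hη
        obtain ⟨η₀, rfl⟩ := Ordinal.mem_range_lift_of_le hη.le
        obtain ⟨ξ₀, hξ₀C, hl, hr⟩ := hacc η₀ (Ordinal.lift_lt.mp hη)
        exact ⟨Ordinal.lift.{u} ξ₀, hξ₀C, Ordinal.lift_lt.mpr hl, Ordinal.lift_lt.mpr hr⟩
    · intro ξ₀ hξ₀
      have hex : ∃ η₀ : Ordinal.{0},
          Ordinal.lift.{u} η₀ = Ordinal.lift.{u} ξ₀ := ⟨ξ₀, rfl⟩
      have h1 : (if hη : ∃ η₀ : Ordinal.{0},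
            Ordinal.lift.{u} η₀ = Ordinal.lift.{u} ξ₀ then g₀ hη.choose else default)
          = g₀ ξ₀ := by
        rw [dif_pos hex]
        exact congrArg g₀ (Ordinal.lift_inj.mp hex.choose_spec)
      calc g₀ ξ₀ = (if hη : ∃ η₀ : Ordinal.{0},
            Ordinal.lift.{u} η₀ = Ordinal.lift.{u} ξ₀ then g₀ hη.choose else default) :=
            h1.symm
        _ = Ψ (Ordinal.lift.{u} ξ₀) f := hCorr _ hξ₀
        _ = _ := by
            apply hΨ.1
            intro η hη
            have hex2 : ∃ η₀ : Ordinal.{0}, Ordinal.lift.{u} η₀ = η :=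
              Ordinal.mem_range_lift_of_le hη.le
            rw [dif_pos hex2]
            show f η = f (Ordinal.lift.{u} hex2.choose)
            rw [hex2.choose_spec]

lemma lift_core (h0 : (2 : Cardinal.{0}) ^ Cardinal.aleph0 = 2 ^ Cardinal.aleph 1) :
    (2 : Cardinal.{v}) ^ Cardinal.aleph0 = 2 ^ Cardinal.aleph 1 := by
  have hl := congrArg Cardinal.lift.{v} h0
  rwa [Cardinal.lift_power, Cardinal.lift_power, Cardinal.lift_two, Cardinal.lift_aleph0,
    Cardinal.lift_aleph, Ordinal.lift_one] at hl

end Stmt5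

end

/-- If there is a (2^ℵ₀, 2^ℵ₀)-predictor (2^ℵ₀ = 𝔠 realized by the type
ℕ → Bool), then 2^ℵ₀ = 2^ℵ₁. -/
theorem stmt5
    (h : ∃ Ψ : Ordinal → (Ordinal → (ℕ → Bool)) → (ℕ → Bool), IsPredictor Ψ) :
    (2 : Cardinal) ^ Cardinal.aleph0 = 2 ^ Cardinal.aleph 1 := by
  obtain ⟨Ψ, hΨ⟩ := h
  obtain ⟨Ψ₀, hΨ₀⟩ := Stmt5.down Ψ hΨ
  exact Stmt5.lift_core (Stmt5.core Ψ₀ hΨ₀)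
end

section
/- If X is a compact, connected, infinite Hausdorff space, then the relation p ⋇ q defined by p ∩ q = ∅ is a strong incompatibility relation on the poset K_X of closed, connected, infinite subsets of X ordered by inclusion. -/
open Set

lemma bump_s8 {X : Type*} [TopologicalSpace X] [CompactSpace X] [T2Space X]
    {p q : Set X} (hpcl : IsClosed p) (hpc : IsPreconnected p) (hqcl : IsClosed q)
    (hmeet : (p ∩ q).Nonempty) {x : X} (hx : x ∈ p) (hxq : x ∉ q) :
    ∃ r : Set X, IsClosed r ∧ IsConnected r ∧ r.Infinite ∧ r ⊆ p ∧ r ∩ q = ∅ := by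
  obtain ⟨U, V, hUo, hVo, hxU, hqV, hUV⟩ :=
    SeparatedNhds.of_isCompact_isCompact (isCompact_singleton (x := x))
      (hqcl.isCompact) (by simpa [Set.disjoint_singleton_left] using hxq)
  have hxU : x ∈ U := hxU rfl
  set F : Set X := p ∩ Vᶜ with hF
  have hFcl : IsClosed F := hpcl.inter hVo.isClosed_compl
  have hFq : F ∩ q = ∅ := by
    apply eq_empty_of_forall_notMem
    rintro z ⟨⟨_, hzV⟩, hzq⟩
    exact hzV (hqV hzq)
  have hxF : x ∈ F := ⟨hx, fun hxV => hUV.ne_of_mem hxU hxV rfl⟩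
  have : CompactSpace F := isCompact_iff_compactSpace.mp hFcl.isCompact
  set x' : F := ⟨x, hxF⟩
  set r : Set X := Subtype.val '' connectedComponent x' with hr
  have hrF : r ⊆ F := by rintro z ⟨w, _, rfl⟩; exact w.2
  have hrcl : IsClosed r :=
    ((isClosed_connectedComponent.isCompact).image continuous_subtype_val).isClosed
  have hrconn : IsConnected r :=
    (isConnected_connectedComponent).image _ continuous_subtype_val.continuousOn
  -- r meets closure V
  have hmeetV : (r ∩ closure V).Nonempty := by
    by_contra hcon
    rw [Set.not_nonempty_iff_eq_empty] at hcon
    -- clopen reduction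
    have hqc := connectedComponent_eq_iInter_isClopen x'
    set D : Set F := Subtype.val ⁻¹' closure V with hD
    have hDcl : IsClosed D := isClosed_closure.preimage continuous_subtype_val
    have hdisj : D ∩ ⋂ s : { s : Set F // IsClopen s ∧ x' ∈ s }, (s : Set F) = ∅ := by
      rw [← hqc]
      apply eq_empty_of_forall_notMem
      rintro z ⟨hz1, hz2⟩
      exact (eq_empty_iff_forall_notMem.mp hcon) z.1 ⟨⟨z, hz2, rfl⟩, hz1⟩
    obtain ⟨t, ht⟩ := (hDcl.isCompact).elim_finite_subfamily_closed _
      (fun s : { s : Set F // IsClopen s ∧ x' ∈ s } => s.2.1.1)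
      (by rw [hdisj])
    set K : Set F := ⋂ i ∈ t, (i : Set F) with hK
    have hKclopen : IsClopen K := by
      apply Set.Finite.isClopen_biInter t.finite_toSet
      exact fun i _ => i.2.1
    have hxK : x' ∈ K := mem_iInter₂.mpr fun i _ => i.2.2
    have hKD : ∀ z ∈ K, (z : X) ∉ closure V := by
      intro z hzK hzV
      exact (eq_empty_iff_forall_notMem.mp ht) z ⟨hzV, hzK⟩
    -- K0 := image of K in X
    set K0 : Set X := Subtype.val '' K with hK0
    have hK0cl : IsClosed K0 :=
      ((hKclopen.isClosed.isCompact).image continuous_subtype_val).isClosed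
    obtain ⟨O, hOo, hKO⟩ := isOpen_induced_iff.mp hKclopen.isOpen
    have hK0eq : K0 = p ∩ (O ∩ (closure V)ᶜ) := by
      apply Subset.antisymm
      · rintro z ⟨w, hwK, rfl⟩
        refine ⟨w.2.1, ?_, hKD w hwK⟩
        have : w ∈ Subtype.val ⁻¹' O := by rw [hKO]; exact hwK
        exact this
      · rintro z ⟨hzp, hzO, hzV⟩
        have hzF : z ∈ F := ⟨hzp, fun h => hzV (subset_closure h)⟩
        refine ⟨⟨z, hzF⟩, ?_, rfl⟩
        rw [← hKO]; exact hzO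
    -- now p connected, K0 clopen-in-p, nonempty, proper
    obtain ⟨z0, hz0p, hz0q⟩ := hmeet
    have hz0K : z0 ∉ K0 := by
      rw [hK0eq]
      rintro ⟨_, _, h⟩
      exact h (subset_closure (hqV hz0q))
    have := hpc (O ∩ (closure V)ᶜ) K0ᶜ (hOo.inter isClosed_closure.isOpen_compl)
      hK0cl.isOpen_compl
      (fun z hz => by
        by_cases hzK : z ∈ K0
        · left; exact (hK0eq ▸ hzK).2
        · right; exact hzK)
      ⟨x, hx, ((hK0eq ▸ (⟨x', hxK, rfl⟩ : x ∈ K0) : x ∈ p ∩ (O ∩ (closure V)ᶜ))).2⟩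
      ⟨z0, hz0p, hz0K⟩
    obtain ⟨z, hzp, hzW, hzK⟩ := this
    exact hzK (by rw [hK0eq]; exact ⟨hzp, hzW⟩)
  obtain ⟨y, hyr, hyV⟩ := hmeetV
  have hyx : y ≠ x := by
    rintro rfl
    have : closure V ⊆ Uᶜ := closure_minimal (fun z hz => (hUV.ne_of_mem · hz rfl)) hUo.isClosed_compl
    exact this hyV hxU
  have hxr : x ∈ r := ⟨x', mem_connectedComponent, rfl⟩
  have hrinf : r.Infinite :=
    hrconn.isPreconnected.infinite_of_nontrivial ⟨y, hyr, x, hxr, hyx⟩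
  exact ⟨r, hrcl, hrconn, hrinf, fun z hz => (hrF hz).1,
    eq_empty_of_forall_notMem fun z ⟨hz1, hz2⟩ =>
      (eq_empty_iff_forall_notMem.mp hFq) z ⟨hrF hz1, hz2⟩⟩


/-- p and q are incompatible in the forcing poset P: no common lower bound. -/
def Incompat {P : Type*} [Preorder P] (p q : P) : Prop := ¬ ∃ r, r ≤ p ∧ r ≤ q

/-- S is a strong incompatibility relation on the forcing poset P. -/
def IsStrongIncompat {P : Type*} [Preorder P] (S : P → P → Prop) : Prop :=
  (∀ p q, S p q → Incompat p q) ∧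
  (∀ p q, Incompat p q → ∃ p₁ q₁, p₁ ≤ p ∧ q₁ ≤ q ∧ S p₁ q₁) ∧
  (∀ p q p₁ q₁, S p q → p₁ ≤ p → q₁ ≤ q → S p₁ q₁)

/-- For X compact connected infinite Hausdorff, the disjointness relation
p ∩ q = ∅ is a strong incompatibility relation on the poset K_X of closed connected
infinite subsets of X ordered by inclusion. -/
theorem stmt8 {X : Type*} [TopologicalSpace X] [CompactSpace X] [T2Space X]
    [ConnectedSpace X] [Infinite X] :
    IsStrongIncompat
      (fun p q : {s : Set X // IsClosed s ∧ IsConnected s ∧ s.Infinite} =>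
        p.1 ∩ q.1 = ∅) := by
  refine ⟨?_, ?_, ?_⟩
  · rintro p q h ⟨r, hrp, hrq⟩
    obtain ⟨z, hz⟩ := r.2.2.1.nonempty
    exact (eq_empty_iff_forall_notMem.mp h) z ⟨hrp hz, hrq hz⟩
  · intro p q h
    by_cases hd : p.1 ∩ q.1 = ∅
    · exact ⟨p, q, le_refl _, le_refl _, hd⟩
    · have hmeet : (p.1 ∩ q.1).Nonempty := Set.nonempty_iff_ne_empty.mpr hd
      have hpq : ¬ p.1 ⊆ q.1 := fun hs => h ⟨p, le_refl _, hs⟩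
      have hqp : ¬ q.1 ⊆ p.1 := fun hs => h ⟨q, hs, le_refl _⟩
      obtain ⟨x, hxp, hxq⟩ := Set.not_subset.mp hpq
      obtain ⟨y, hyq, hyp⟩ := Set.not_subset.mp hqp
      obtain ⟨r, hrcl, hrconn, hrinf, hrp, hrq⟩ :=
        bump_s8 p.2.1 p.2.2.1.isPreconnected q.2.1 hmeet hxp hxq
      obtain ⟨s, hscl, hsconn, hsinf, hsq, hsp⟩ :=
        bump_s8 q.2.1 q.2.2.1.isPreconnected p.2.1 (by rwa [Set.inter_comm] at hmeet) hyq hyp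
      refine ⟨⟨r, hrcl, hrconn, hrinf⟩, ⟨s, hscl, hsconn, hsinf⟩, hrp, hsq, ?_⟩
      apply Set.eq_empty_of_forall_notMem
      rintro z ⟨hz1, hz2⟩
      exact (Set.eq_empty_iff_forall_notMem.mp hrq) z ⟨hz1, hsq hz2⟩
  · intro p q p₁ q₁ h h1 h2
    apply Set.eq_empty_of_forall_notMem
    rintro z ⟨hz1, hz2⟩
    exact (Set.eq_empty_iff_forall_notMem.mp h) z ⟨h1 hz1, h2 hz2⟩
end

section
/- If X is a compact, connected, infinite Hausdorff space with no subset homeomorphic to the Cantor set, then the poset K_X of closed connected infinite subsets of X has the weak Cantor tree property with respect to the disjointness relation: whenever {p_s : s ∈ 2^{<ω}} ⊆ K_X satisfies p_{s⌢i} ⊊ p_s (i=0,1) and p_{s⌢0} ∩ p_{s⌢1} = ∅, there is some f ∈ 2^ω with ⋂_{n} p_{f↾n} infinite and connected (hence ⋂_n p_{f↾n} ∈ K_X). -/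
open Set

/-- If a nested sequence of compact closed sets has intersection inside an open set,
then some member is inside the open set. -/
lemma exists_member_subset_of_iInter_subset {X : Type*} [TopologicalSpace X]
    (K : ℕ → Set X) (hdec : ∀ n, K (n + 1) ⊆ K n) (hcl : ∀ n, IsClosed (K n))
    (hcpt : ∀ n, IsCompact (K n)) {U : Set X} (hU : IsOpen U)
    (h : (⋂ n, K n) ⊆ U) : ∃ n, K n ⊆ U := by
  by_contra hc
  push_neg at hc
  have hne : ∀ n, (K n ∩ Uᶜ).Nonempty := fun n => by
    obtain ⟨x, hx, hxU⟩ := Set.not_subset.mp (hc n)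
    exact ⟨x, hx, hxU⟩
  obtain ⟨x, hx⟩ := IsCompact.nonempty_iInter_of_sequence_nonempty_isCompact_isClosed
    (fun n => K n ∩ Uᶜ) (fun n => inter_subset_inter_left _ (hdec n)) hne
    ((hcpt 0).inter_right hU.isClosed_compl) (fun n => (hcl n).inter hU.isClosed_compl)
  have hxK : x ∈ ⋂ n, K n := mem_iInter.2 fun n => (mem_iInter.1 hx n).1
  exact (mem_iInter.1 hx 0).2 (h hxK)

/-- A nested intersection of closed connected sets in a compact Hausdorff space is connected. -/
lemma isConnected_iInter_of_nested {X : Type*} [TopologicalSpace X] [CompactSpace X] [T2Space X]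
    (K : ℕ → Set X) (hdec : ∀ n, K (n + 1) ⊆ K n) (hcl : ∀ n, IsClosed (K n))
    (hconn : ∀ n, IsConnected (K n)) : IsConnected (⋂ n, K n) := by
  have hcpt : ∀ n, IsCompact (K n) := fun n => (hcl n).isCompact
  have hne : (⋂ n, K n).Nonempty :=
    IsCompact.nonempty_iInter_of_sequence_nonempty_isCompact_isClosed K hdec
      (fun n => (hconn n).nonempty) (hcpt 0) hcl
  refine ⟨hne, ?_⟩
  rw [isPreconnected_iff_subset_of_fully_disjoint_closed (isClosed_iInter hcl)]
  intro a b ha hb hab hd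
  obtain ⟨u, v, hu, hv, hau, hbv, huv⟩ := normal_separation ha hb hd
  obtain ⟨n, hn⟩ := exists_member_subset_of_iInter_subset K hdec hcl hcpt (hu.union hv)
    (hab.trans (union_subset_union hau hbv))
  have hKuv : K n ⊆ u ∨ K n ⊆ v := by
    rcases (K n ∩ u).eq_empty_or_nonempty with h1 | h1
    · exact Or.inr fun x hx => (hn hx).resolve_left
        (fun hxu => Set.eq_empty_iff_forall_notMem.mp h1 x ⟨hx, hxu⟩)
    rcases (K n ∩ v).eq_empty_or_nonempty with h2 | h2
    · exact Or.inl fun x hx => (hn hx).resolve_right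
        (fun hxv => Set.eq_empty_iff_forall_notMem.mp h2 x ⟨hx, hxv⟩)
    obtain ⟨x, hx⟩ := (hconn n).isPreconnected u v hu hv hn h1 h2
    exact absurd (huv.le_bot ⟨hx.2.1, hx.2.2⟩) (by simp)
  have hIK : (⋂ m, K m) ⊆ K n := iInter_subset K n
  rcases hKuv with hKu | hKv
  · left
    intro x hx
    rcases hab hx with hxa | hxb
    · exact hxa
    · exact absurd (huv.le_bot ⟨hKu (hIK hx), hbv hxb⟩) (by simp)
  · right
    intro x hx
    rcases hab hx with hxa | hxb
    · exact absurd (huv.le_bot ⟨hau hxa, hKv (hIK hx)⟩) (by simp)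
    · exact hxb

/-- A finite preconnected set in a Hausdorff space is a subsingleton. -/
lemma subsingleton_of_finite_preconnected {X : Type*} [TopologicalSpace X] [T2Space X]
    {s : Set X} (hfin : s.Finite) (hconn : IsPreconnected s) : s.Subsingleton := by
  intro a ha b hb
  by_contra hne
  have hdisj : Disjoint ({a} : Set X) (s \ {a}) := by
    simp [Set.disjoint_left]
  obtain ⟨u, v, hu, hv, hau, hbv, huv⟩ := SeparatedNhds.of_isCompact_isCompact
    isCompact_singleton (hfin.diff (t := {a})).isCompact hdisj
  have hcov : s ⊆ u ∪ v := by
    intro x hx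
    by_cases hxa : x = a
    · exact Or.inl (hau (by simp [hxa]))
    · exact Or.inr (hbv ⟨hx, hxa⟩)
  have h1 : (s ∩ u).Nonempty := ⟨a, ha, hau rfl⟩
  have h2 : (s ∩ v).Nonempty := ⟨b, hb, hbv ⟨hb, fun h => hne (Set.mem_singleton_iff.mp h).symm⟩⟩
  obtain ⟨x, hx⟩ := hconn u v hu hv hcov h1 h2
  exact absurd (huv.le_bot ⟨hx.2.1, hx.2.2⟩) (by simp)

/-- S contains a homeomorphic copy of the Cantor set 2^ω. -/
def HasCantorSubset {Y : Type*} [TopologicalSpace Y] (S : Set Y) : Prop :=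
  ∃ C : Set Y, C ⊆ S ∧ Nonempty (C ≃ₜ (ℕ → Bool))

/-- If X is compact connected infinite Hausdorff with no Cantor subset, then
K_X has the weak Cantor tree property with respect to disjointness: for every family
{p_s : s ∈ 2^{<ω}} in K_X with p_(s⌢i) ⊊ p_s and p_(s⌢0) ∩ p_(s⌢1) = ∅, there is a
branch f ∈ 2^ω with ⋂ₙ p_(f↾n) infinite and connected. -/
theorem stmt9 {X : Type*} [TopologicalSpace X] [CompactSpace X] [T2Space X]
    [ConnectedSpace X] [Infinite X]
    (hX : ¬ HasCantorSubset (Set.univ : Set X))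
    (p : List Bool → {s : Set X // IsClosed s ∧ IsConnected s ∧ s.Infinite})
    (hsub : ∀ s i, (p (s ++ [i])).1 ⊂ (p s).1)
    (hdisj : ∀ s, (p (s ++ [false])).1 ∩ (p (s ++ [true])).1 = ∅) :
    ∃ f : ℕ → Bool,
      (⋂ n : ℕ, (p ((List.range n).map f)).1).Infinite ∧
      IsConnected (⋂ n : ℕ, (p ((List.range n).map f)).1) := by
  classical
  set K : (ℕ → Bool) → Set X := fun f => ⋂ n, (p ((List.range n).map f)).1 with hK
  have hstep : ∀ (f : ℕ → Bool) (n : ℕ),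
      (List.range (n + 1)).map f = (List.range n).map f ++ [f n] := by
    intro f n
    rw [List.range_succ, List.map_append]
    rfl
  have hdec : ∀ (f : ℕ → Bool) (n : ℕ),
      (p ((List.range (n + 1)).map f)).1 ⊆ (p ((List.range n).map f)).1 := by
    intro f n
    rw [hstep]
    exact (hsub _ _).subset
  have hcl : ∀ s, IsClosed (p s).1 := fun s => (p s).2.1
  have hconnS : ∀ s, IsConnected (p s).1 := fun s => (p s).2.2.1
  have hKconn : ∀ f, IsConnected (K f) := fun f =>
    isConnected_iInter_of_nested _ (hdec f) (fun n => hcl _) (fun n => hconnS _)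
  by_contra hcon
  push_neg at hcon
  have hfin : ∀ f, (K f).Finite := by
    intro f
    by_contra hf
    exact (hcon f (Set.not_infinite.not_right.mp hf)) (hKconn f)
  -- each K f is a singleton
  have hsub' : ∀ f, (K f).Subsingleton := fun f =>
    subsingleton_of_finite_preconnected (hfin f) (hKconn f).isPreconnected
  choose x hx using fun f => (hKconn f).nonempty
  have hKeq : ∀ f, K f = {x f} := fun f =>
    Set.eq_singleton_iff_nonempty_unique_mem.mpr ⟨⟨x f, hx f⟩, fun y hy => hsub' f hy (hx f)⟩
  -- x is injective
  have hxmem : ∀ f n, x f ∈ (p ((List.range n).map f)).1 := fun f n =>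
    mem_iInter.1 (hx f) n
  have hinj : Function.Injective x := by
    intro f g hfg
    by_contra hne
    have hex : ∃ n, f n ≠ g n := Function.ne_iff.mp hne
    set n := Nat.find hex with hn
    have hfgn : f n ≠ g n := Nat.find_spec hex
    have hagree : ∀ m < n, f m = g m := fun m hm => not_not.mp (Nat.find_min hex hm)
    have hlist : (List.range n).map f = (List.range n).map g :=
      List.map_congr_left fun a ha => hagree a (List.mem_range.mp ha)
    have hmf : x f ∈ (p ((List.range n).map f ++ [f n])).1 := by
      rw [← hstep f n]; exact hxmem f (n + 1)
    have hmg : x f ∈ (p ((List.range n).map f ++ [g n])).1 := by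
      rw [hfg, hlist, ← hstep g n]; exact hxmem g (n + 1)
    have : x f ∈ (p ((List.range n).map f ++ [false])).1 ∩ (p ((List.range n).map f ++ [true])).1 := by
      cases hfn : f n <;> cases hgn : g n
      · exact absurd (hfn.trans hgn.symm) hfgn
      · exact ⟨hfn ▸ hmf, hgn ▸ hmg⟩
      · exact ⟨hgn ▸ hmg, hfn ▸ hmf⟩
      · exact absurd (hfn.trans hgn.symm) hfgn
    rw [hdisj ((List.range n).map f)] at this
    exact this
  -- x is continuous
  have hcont : Continuous x := by
    rw [continuous_iff_continuousAt]
    intro f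
    rw [ContinuousAt, Filter.tendsto_def]
    intro U hU
    obtain ⟨V, hVU, hVopen, hxV⟩ := mem_nhds_iff.mp hU
    have hKV : K f ⊆ V := by rw [hKeq f]; exact singleton_subset_iff.mpr hxV
    obtain ⟨n, hn⟩ := exists_member_subset_of_iInter_subset
      (fun n => (p ((List.range n).map f)).1) (hdec f) (fun n => hcl _)
      (fun n => (hcl _).isCompact) hVopen hKV
    have hW : IsOpen {g : ℕ → Bool | ∀ i ∈ Finset.range n, g i = f i} := by
      have : {g : ℕ → Bool | ∀ i ∈ Finset.range n, g i = f i} =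
          ⋂ i ∈ Finset.range n, (fun g : ℕ → Bool => g i) ⁻¹' {f i} := by
        ext g; simp [Set.mem_iInter]
      rw [this]
      exact isOpen_biInter_finset fun i _ => (continuous_apply i).isOpen_preimage _
        (isOpen_discrete _)
    refine Filter.mem_of_superset (hW.mem_nhds (by simp)) ?_
    intro g hg
    have hlist : (List.range n).map g = (List.range n).map f :=
      List.map_congr_left fun a ha => hg a (by simpa using List.mem_range.mp ha)
    have : x g ∈ (p ((List.range n).map f)).1 := hlist ▸ hxmem g n
    exact Set.mem_preimage.mpr (hVU (hn this))
  -- build a Cantor subset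
  have hemb : Topology.IsClosedEmbedding x := hcont.isClosedEmbedding hinj
  refine hX ⟨Set.range x, Set.subset_univ _, ⟨hemb.toIsEmbedding.toHomeomorph.symm⟩⟩
end

section
/- In a forcing poset P with a strong incompatibility relation ⋇ having the weak Cantor tree property, given a strong Cantor tree {p_s : s ∈ 2^{<ω}}, the set of branches f ∈ 2^ω for which there exists q ∈ P with q ≤ p_{f↾n} for all n meets every nonempty perfect subset of the Cantor space 2^ω. -/
/-- {p_s : s ∈ 2^{<ω}} is a strong Cantor tree with respect to S. -/
def IsStrongCantorTree {P : Type*} [Preorder P] (S : P → P → Prop)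
    (p : List Bool → P) : Prop :=
  (∀ s i, p (s ++ [i]) < p s) ∧ ∀ s, S (p (s ++ [false])) (p (s ++ [true]))

/-- P has the weak Cantor tree property with respect to S: every strong Cantor tree has a
branch f ∈ 2^ω admitting a lower bound for all the p_{f↾n}. -/
def HasWCTP {P : Type*} [Preorder P] (S : P → P → Prop) : Prop :=
  ∀ p : List Bool → P, IsStrongCantorTree S p →
    ∃ f : ℕ → Bool, ∃ q : P, ∀ n : ℕ, q ≤ p ((List.range n).map f)

/-- t is extendible to an element of K. -/
def ExtIn (K : Set (ℕ → Bool)) (t : List Bool) : Prop :=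
  ∃ x ∈ K, ∀ i < t.length, x i = t.getD i false

/-- monotonicity of a Cantor tree along extensions -/
lemma tree_mono {P : Type*} [Preorder P] (p : List Bool → P)
    (hp : ∀ s i, p (s ++ [i]) < p s) (v t : List Bool) : p (t ++ v) ≤ p t := by
  induction v using List.reverseRecOn with
  | nil => simp
  | append_singleton u i ih =>
    calc p (t ++ (u ++ [i])) = p ((t ++ u) ++ [i]) := by rw [List.append_assoc]
    _ ≤ p (t ++ u) := le_of_lt (hp _ _)
    _ ≤ p t := ih

lemma tree_mono' {P : Type*} [Preorder P] (p : List Bool → P)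
    (hp : ∀ s i, p (s ++ [i]) < p s) {t u : List Bool} (h : t <+: u) : p u ≤ p t := by
  obtain ⟨v, rfl⟩ := h; exact tree_mono p hp v t

/-- splitting lemma for perfect sets in Cantor space -/
lemma perfect_split {K : Set (ℕ → Bool)} (hK : Perfect K) (t : List Bool)
    (ht : ExtIn K t) :
    ∃ t', t <+: t' ∧ ExtIn K (t' ++ [false]) ∧ ExtIn K (t' ++ [true]) := by
  obtain ⟨x, hxK, hx⟩ := ht
  set U : Set (ℕ → Bool) := {y | ∀ i < t.length, y i = x i} with hU
  have hUopen : IsOpen U := by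
    have : U = ⋂ i ∈ Finset.range t.length, (fun y : ℕ → Bool => y i) ⁻¹' {x i} := by
      ext y; simp [hU, Set.mem_iInter]
    rw [this]
    exact isOpen_biInter_finset fun i _ => (continuous_apply i).isOpen_preimage _ (isOpen_discrete _)
  have hUx : U ∈ nhds x := hUopen.mem_nhds (fun i _ => rfl)
  obtain ⟨y, hymem, hyx⟩ : ∃ y ∈ U ∩ K, y ≠ x := accPt_iff_nhds.1 (hK.acc x hxK) U hUx
  obtain ⟨hyU, hyK⟩ := hymem
  have hne : ∃ n, y n ≠ x n := Function.ne_iff.1 hyx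
  classical
  set n := Nat.find hne with hn
  have hnspec : y n ≠ x n := Nat.find_spec hne
  have hnmin : ∀ m < n, y m = x m := fun m hm => by
    by_contra h; exact (Nat.find_min hne hm) h
  have hlen : t.length ≤ n := by
    by_contra h
    exact hnspec (hyU n (lt_of_not_ge h))
  refine ⟨(List.range n).map x, ?_, ?_, ?_⟩
  · rw [List.prefix_iff_eq_take]
    have h1 : List.take t.length ((List.range n).map x) = (List.range t.length).map x := by
      rw [← List.map_take, List.take_range, min_eq_left hlen]
    rw [h1]
    apply List.ext_getElem (by simp)
    intro i h₁ h₂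
    rw [List.getElem_map, List.getElem_range]
    rw [← List.getD_eq_getElem t false h₁]
    exact (hx i h₁).symm
  · -- child false
    rcases Bool.eq_false_or_eq_true (x n) with hxn | hxn
    · refine ⟨y, hyK, ?_⟩
      intro i hi
      simp only [List.length_append, List.length_map, List.length_range, List.length_cons,
        List.length_nil] at hi
      rcases lt_or_eq_of_le (Nat.lt_succ_iff.1 hi) with h | h
      · rw [List.getD_append _ _ _ i (by simpa using h),
          List.getD_eq_getElem _ _ (by simpa using h), List.getElem_map, List.getElem_range]
        exact hnmin i h
      · subst h
        have : ((List.range n).map x ++ [false]).getD n false = false := by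
          rw [List.getD_eq_getElem _ _ (by simp)]
          simp
        rw [this]
        have := hnspec
        rw [hxn] at this
        simpa using this
    · refine ⟨x, hxK, ?_⟩
      intro i hi
      simp only [List.length_append, List.length_map, List.length_range, List.length_cons,
        List.length_nil] at hi
      rcases lt_or_eq_of_le (Nat.lt_succ_iff.1 hi) with h | h
      · rw [List.getD_append _ _ _ i (by simpa using h),
          List.getD_eq_getElem _ _ (by simpa using h), List.getElem_map, List.getElem_range]
      · subst h
        have : ((List.range n).map x ++ [false]).getD n false = false := by
          rw [List.getD_eq_getElem _ _ (by simp)]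
          simp
        rw [this]; exact hxn
  · -- child true
    rcases Bool.eq_false_or_eq_true (x n) with hxn | hxn
    · refine ⟨x, hxK, ?_⟩
      intro i hi
      simp only [List.length_append, List.length_map, List.length_range, List.length_cons,
        List.length_nil] at hi
      rcases lt_or_eq_of_le (Nat.lt_succ_iff.1 hi) with h | h
      · rw [List.getD_append _ _ _ i (by simpa using h),
          List.getD_eq_getElem _ _ (by simpa using h), List.getElem_map, List.getElem_range]
      · subst h
        have : ((List.range n).map x ++ [true]).getD n false = true := by
          rw [List.getD_eq_getElem _ _ (by simp)]
          simp
        rw [this]; exact hxn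
    · refine ⟨y, hyK, ?_⟩
      intro i hi
      simp only [List.length_append, List.length_map, List.length_range, List.length_cons,
        List.length_nil] at hi
      rcases lt_or_eq_of_le (Nat.lt_succ_iff.1 hi) with h | h
      · rw [List.getD_append _ _ _ i (by simpa using h),
          List.getD_eq_getElem _ _ (by simpa using h), List.getElem_map, List.getElem_range]
        exact hnmin i h
      · subst h
        have : ((List.range n).map x ++ [true]).getD n false = true := by
          rw [List.getD_eq_getElem _ _ (by simp)]
          simp
        rw [this]
        have := hnspec
        rw [hxn] at this
        simpa using this

/-- closedness: a pointwise limit of members of K is in K -/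
lemma mem_of_approx {K : Set (ℕ → Bool)} (hK : Perfect K) (f : ℕ → Bool)
    (h : ∀ m : ℕ, ∃ x ∈ K, ∀ i < m, x i = f i) : f ∈ K := by
  choose x hxK hx using h
  have htend : Filter.Tendsto x Filter.atTop (nhds f) := by
    rw [tendsto_pi_nhds]
    intro i
    apply Filter.Tendsto.congr' _ tendsto_const_nhds
    filter_upwards [Filter.eventually_ge_atTop (i + 1)] with m hm
    exact (hx m i hm).symm
  exact hK.closed.mem_of_tendsto htend (Filter.Eventually.of_forall hxK)

/-- recursive construction of the embedded tree (strings read in reverse) -/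
def buildStr (sp : List Bool → List Bool) : List Bool → List Bool
  | [] => []
  | i :: s => sp (buildStr sp s) ++ [i]

theorem stmt11' {P : Type*} [Preorder P] (S : P → P → Prop)
    (hS : IsStrongIncompat S) (hW : HasWCTP S)
    (p : List Bool → P) (hp : IsStrongCantorTree S p)
    (K : Set (ℕ → Bool)) (hK : Perfect K) (hKne : K.Nonempty) :
    ∃ f ∈ K, ∃ q : P, ∀ n : ℕ, q ≤ p ((List.range n).map f) := by
  classical
  -- splitting function
  have hsp : ∀ t : List Bool, ∃ t', ExtIn K t →
      (t <+: t' ∧ ExtIn K (t' ++ [false]) ∧ ExtIn K (t' ++ [true])) := by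
    intro t
    by_cases ht : ExtIn K t
    · obtain ⟨t', h⟩ := perfect_split hK t ht
      exact ⟨t', fun _ => h⟩
    · exact ⟨t, fun h => absurd h ht⟩
  choose sp hspP using hsp
  set N : List Bool → List Bool := buildStr sp with hN
  have hNnil : N [] = [] := rfl
  have hNcons : ∀ i s, N (i :: s) = sp (N s) ++ [i] := fun i s => rfl
  -- every node is extendible
  have hExt : ∀ s, ExtIn K (N s) := by
    intro s
    induction s with
    | nil =>
      obtain ⟨x, hx⟩ := hKne
      exact ⟨x, hx, by simp [hNnil]⟩
    | cons i s ih =>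
      rw [hNcons]
      cases i
      · exact (hspP (N s) ih).2.1
      · exact (hspP (N s) ih).2.2
  -- the new Cantor tree
  set q : List Bool → P := fun s => p (N s.reverse) with hq
  have hqTree : IsStrongCantorTree S q := by
    constructor
    · intro s i
      have hrev : (s ++ [i]).reverse = i :: s.reverse := by simp
      show p (N (s ++ [i]).reverse) < p (N s.reverse)
      rw [hrev, hNcons]
      have hpre : N s.reverse <+: sp (N s.reverse) := (hspP _ (hExt s.reverse)).1
      exact lt_of_lt_of_le (hp.1 (sp (N s.reverse)) i) (tree_mono' p hp.1 hpre)
    · intro s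
      have h0 : (s ++ [false]).reverse = false :: s.reverse := by simp
      have h1 : (s ++ [true]).reverse = true :: s.reverse := by simp
      show S (p (N (s ++ [false]).reverse)) (p (N (s ++ [true]).reverse))
      rw [h0, h1, hNcons, hNcons]
      exact hp.2 (sp (N s.reverse))
  obtain ⟨g, q₀, hq₀⟩ := hW q hqTree
  -- the chain of nodes along g
  set t : ℕ → List Bool := fun n => N (((List.range n).map g).reverse) with htdef
  have ht0 : t 0 = [] := by simp [htdef, hNnil]
  have htsucc : ∀ n, t (n + 1) = sp (t n) ++ [g n] := by
    intro n
    have : ((List.range (n+1)).map g).reverse = g n :: ((List.range n).map g).reverse := by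
      rw [List.range_succ]; simp
    simp only [htdef, this, hNcons]
  have hExtT : ∀ n, ExtIn K (t n) := fun n => hExt _
  have htchain : ∀ n, t n <+: t (n + 1) := by
    intro n
    rw [htsucc]
    exact ((hspP _ (hExtT n)).1).trans (List.prefix_append _ _)
  have htmono : ∀ m n, m ≤ n → t m <+: t n := by
    intro m n h
    induction h with
    | refl => exact List.prefix_refl _
    | step h ih => exact ih.trans (htchain _)
  have htlen : ∀ n, n ≤ (t n).length := by
    intro n
    induction n with
    | zero => simp
    | succ n ih =>
      rw [htsucc]
      have : (t n).length ≤ (sp (t n)).length := ((hspP _ (hExtT n)).1).length_le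
      simp only [List.length_append, List.length_cons, List.length_nil]
      omega
  -- the branch
  set f : ℕ → Bool := fun k => (t (k + 1)).getD k false with hfdef
  -- getD agreement along the chain
  have hgetD : ∀ {u v : List Bool}, u <+: v → ∀ k < u.length, u.getD k false = v.getD k false := by
    rintro u v ⟨w, rfl⟩ k hk
    exact (List.getD_append u w false k hk).symm
  have hf : ∀ n, ∀ k < (t n).length, f k = (t n).getD k false := by
    intro n k hk
    rcases le_or_gt (k + 1) n with h | h
    · exact hgetD (htmono _ _ h) k (lt_of_lt_of_le (Nat.lt_succ_self k) (htlen (k+1)))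
    · exact (hgetD (htmono n (k+1) h.le) k hk).symm
  refine ⟨f, ?_, q₀, ?_⟩
  · -- f ∈ K
    apply mem_of_approx hK
    intro m
    obtain ⟨x, hxK, hx⟩ := hExtT m
    refine ⟨x, hxK, fun i hi => ?_⟩
    have hi' : i < (t m).length := lt_of_lt_of_le hi (htlen m)
    rw [hx i hi', ← hf m i hi']
  · -- lower bound
    intro n
    have hpref : (List.range n).map f <+: t n := by
      rw [List.prefix_iff_eq_take]
      apply List.ext_getElem
      · simp [min_eq_left ((by simpa using htlen n : n ≤ (t n).length))]
      · intro i h₁ h₂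
        rw [List.getElem_take]
        simp only [List.length_map, List.length_range] at h₁
        rw [List.getElem_map, List.getElem_range]
        have hi : i < (t n).length := lt_of_lt_of_le h₁ (htlen n)
        rw [← List.getD_eq_getElem (t n) false hi]
        exact hf n i hi
    exact le_trans (hq₀ n) (tree_mono' p hp.1 hpref)

/-- In a forcing poset with a strong incompatibility relation ⋇ having the
WCTP, given a strong Cantor tree, the set of branches f ∈ 2^ω admitting a lower bound
meets every nonempty perfect subset of the Cantor space 2^ω. -/
theorem stmt11 {P : Type*} [Preorder P] (S : P → P → Prop)
    (hS : IsStrongIncompat S) (hW : HasWCTP S)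
    (p : List Bool → P) (hp : IsStrongCantorTree S p)
    (K : Set (ℕ → Bool)) (hK : Perfect K) (hKne : K.Nonempty) :
    ∃ f ∈ K, ∃ q : P, ∀ n : ℕ, q ≤ p ((List.range n).map f) :=
  stmt11' S hS hW p hp K hK hKne
end

section
/- If P is a Gregory tree, i.e., a subtree of 𝔠^{<ω₁} (ordered by reverse extension) that has the Cantor tree property, is atomless, and has no uncountable chains, then for every ξ < ω₁ the set D_ξ = {p ∈ P : length(p) ≥ ξ} is dense in P. -/
/-- An element of A^{<ω₁}: a sequence of elements of A of countable ordinal length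
(the values of `fn` at ordinals ≥ `len` are irrelevant). -/
structure CSeq.{u, v} (A : Type u) where
  len : Ordinal.{v}
  len_lt : len < omega1.{v}
  fn : Ordinal.{v} → A

/-- Reverse extension: p ≤ q iff p extends q. This makes A^{<ω₁} a forcing preorder. -/
instance {A : Type*} : Preorder (CSeq A) where
  le p q := q.len ≤ p.len ∧ ∀ η < q.len, p.fn η = q.fn η
  le_refl p := ⟨le_rfl, fun _ _ => rfl⟩
  le_trans p q r hpq hqr :=
    ⟨hqr.1.trans hpq.1, fun η hη =>
      (hpq.2 η (lt_of_lt_of_le hη hqr.1)).trans (hqr.2 η hη)⟩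

/-- p, q ∈ T are incompatible within T: no common extension inside T. -/
def TIncompat {A : Type*} (T : Set (CSeq A)) (p q : CSeq A) : Prop :=
  ¬ ∃ r ∈ T, r ≤ p ∧ r ≤ q

/-- The subtree T of A^{<ω₁} has the Cantor tree property. -/
def HasCTPIn {A : Type*} (T : Set (CSeq A)) : Prop :=
  ∀ p : List Bool → CSeq A, (∀ s, p s ∈ T) →
    (∀ s i, p (s ++ [i]) < p s) →
    (∀ s, TIncompat T (p (s ++ [false])) (p (s ++ [true]))) →
    ∃ f : ℕ → Bool, ∃ q ∈ T, ∀ n : ℕ, q ≤ p ((List.range n).map f)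

/-- T is a Gregory tree: a nonempty subtree of 𝔠^{<ω₁} (closed under restriction) with
the Cantor tree property, atomless, and with no uncountable chains. Here the cardinal
𝔠 = 2^ℵ₀ is realized by the type ℕ → Bool. -/
def IsGregoryTree (T : Set (CSeq (ℕ → Bool))) : Prop :=
  T.Nonempty ∧
  (∀ p ∈ T, ∀ δ : Ordinal, ∀ h : δ ≤ p.len,
    CSeq.mk δ (lt_of_le_of_lt h p.len_lt) p.fn ∈ T) ∧
  HasCTPIn T ∧
  (∀ p ∈ T, ∃ q ∈ T, ∃ r ∈ T, q ≤ p ∧ r ≤ p ∧ TIncompat T q r) ∧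
  (∀ C ⊆ T, IsChain (· ≤ ·) C → C.Countable)

/-- A strict extension is strictly longer. -/
theorem CSeq.len_lt_of_lt {A : Type*} {a q : CSeq A} (h : a < q) : q.len < a.len := by
  rcases lt_iff_le_not_ge.mp h with ⟨h1, h2⟩
  refine lt_of_le_of_ne h1.1 fun he => h2 ?_
  exact ⟨he.symm.le, fun η hη => (h1.2 η (he ▸ hη)).symm⟩

/-- The Cantor scheme built from a root and a two-child splitting function. -/
def schemeAux {A : Type*} {T : Set (CSeq A)} (root : {r : CSeq A // r ∈ T})
    (F : ℕ → {r : CSeq A // r ∈ T} → Bool → {r : CSeq A // r ∈ T}) :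
    List Bool → {r : CSeq A // r ∈ T}
  | [] => root
  | i :: t => F t.length (schemeAux root F t) i

theorem scheme {A : Type*} {T : Set (CSeq A)} (hctp : HasCTPIn T)
    (bound : ℕ → Ordinal) (root : {r : CSeq A // r ∈ T})
    (hroot_len : bound 0 ≤ root.val.len)
    (step : ∀ n (r : {r : CSeq A // r ∈ T}), ∃ a ∈ T, ∃ b ∈ T,
      a < r.val ∧ b < r.val ∧ TIncompat T a b ∧
      bound (n + 1) ≤ a.len ∧ bound (n + 1) ≤ b.len) :
    ∃ q ∈ T, q ≤ root.val ∧ ∀ n, bound n ≤ q.len := by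
  choose a ha b hb halt hblt hinc hal hbl using step
  set F : ℕ → {r : CSeq A // r ∈ T} → Bool → {r : CSeq A // r ∈ T} :=
    fun n r i => if i then ⟨b n r, hb n r⟩ else ⟨a n r, ha n r⟩ with hF
  set aux := schemeAux root F with haux
  have hlev : ∀ t : List Bool, bound t.length ≤ (aux t).val.len := by
    intro t
    induction t with
    | nil => exact hroot_len
    | cons i t ih =>
      show bound (t.length + 1) ≤ (F t.length (aux t) i).val.len
      cases i
      · exact hal _ _
      · exact hbl _ _
  have hlt : ∀ (t : List Bool) (i : Bool), (aux (i :: t)).val < (aux t).val := by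
    intro t i
    show (F t.length (aux t) i).val < (aux t).val
    cases i
    · exact halt _ _
    · exact hblt _ _
  set p : List Bool → CSeq A := fun s => (aux s.reverse).val with hp
  have hrev : ∀ (s : List Bool) (i : Bool), (s ++ [i]).reverse = i :: s.reverse := by
    intro s i; simp
  obtain ⟨f, q, hqT, hq⟩ := hctp p (fun s => (aux s.reverse).2)
    (by
      intro s i
      show (aux (s ++ [i]).reverse).val < (aux s.reverse).val
      rw [hrev]; exact hlt _ _)
    (by
      intro s
      show TIncompat T (aux (s ++ [false]).reverse).val (aux (s ++ [true]).reverse).val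
      rw [hrev, hrev]
      exact hinc s.reverse.length (aux s.reverse))
  refine ⟨q, hqT, ?_, ?_⟩
  · have h0 := hq 0
    simpa [hp, haux, schemeAux] using h0
  · intro n
    have h := (hq n).1
    have hlen : ((List.range n).map f).reverse.length = n := by simp
    calc bound n = bound ((List.range n).map f).reverse.length := by rw [hlen]
      _ ≤ (aux ((List.range n).map f).reverse).val.len := hlev _
      _ ≤ q.len := h

/-- If T is a Gregory tree, then for every ξ < ω₁ the set
D_ξ = {p ∈ T : length p ≥ ξ} is dense in T. -/
theorem stmt12 (T : Set (CSeq (ℕ → Bool))) (hT : IsGregoryTree T)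
    (ξ : Ordinal) (hξ : ξ < omega1) :
    ∀ p ∈ T, ∃ q ∈ T, q ≤ p ∧ ξ ≤ q.len := by
  obtain ⟨-, -, hctp, hatom, -⟩ := hT
  revert hξ
  induction ξ using Ordinal.induction with
  | h ξ IH =>
  intro hξ p hp
  rcases Ordinal.zero_or_succ_or_isSuccLimit ξ with h0 | ⟨η, rfl⟩ | hlim
  · exact ⟨p, hp, le_refl p, h0 ▸ zero_le (a := p.len)⟩
  · -- successor case
    have hηξ : η < Order.succ η := Order.lt_succ η
    obtain ⟨q, hq, hqp, hql⟩ := IH η hηξ (hηξ.trans hξ) p hp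
    obtain ⟨A, hA, B, hB, hAq, hBq, hinc⟩ := hatom q hq
    have hnq : ¬ q ≤ A := fun h => hinc ⟨B, hB, hBq.trans h, le_refl B⟩
    have hAlt : A < q := lt_of_le_not_ge hAq hnq
    have := CSeq.len_lt_of_lt hAlt
    exact ⟨A, hA, hAq.trans hqp, Order.succ_le_of_lt (lt_of_le_of_lt hql this)⟩
  · -- limit case
    have hcount : (Set.Iio ξ).Countable := by
      rw [Cardinal.countable_iff_lt_aleph_one, Ordinal.mk_Iio_ordinal]
      have h1 : ξ.card < Cardinal.aleph 1 := Cardinal.lt_ord.mp hξ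
      have h2 := Cardinal.lift_lt.mpr h1
      rwa [Cardinal.lift_aleph, Ordinal.lift_one] at h2
    obtain ⟨g, hg⟩ := hcount.exists_eq_range ⟨0, hlim.pos⟩
    have hglt : ∀ n, g n < ξ := by
      intro n
      have : g n ∈ Set.Iio ξ := hg ▸ Set.mem_range_self n
      exact this
    have hbd : ∀ n, g n + 1 < ξ := by
      intro n
      rw [Ordinal.add_one_eq_succ]
      exact hlim.succ_lt (hglt n)
    obtain ⟨r0, hr0T, hr0p, hr0len⟩ := IH (g 0 + 1) (hbd 0) ((hbd 0).trans hξ) p hp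
    have step : ∀ n (r : {r : CSeq (ℕ → Bool) // r ∈ T}), ∃ a ∈ T, ∃ b ∈ T,
        a < r.val ∧ b < r.val ∧ TIncompat T a b ∧
        g (n + 1) + 1 ≤ a.len ∧ g (n + 1) + 1 ≤ b.len := by
      intro n ⟨r, hr⟩
      obtain ⟨A, hA, B, hB, hAr, hBr, hinc⟩ := hatom r hr
      obtain ⟨a, haT, haA, haL⟩ :=
        IH (g (n + 1) + 1) (hbd (n + 1)) ((hbd (n + 1)).trans hξ) A hA
      obtain ⟨b, hbT, hbB, hbL⟩ :=
        IH (g (n + 1) + 1) (hbd (n + 1)) ((hbd (n + 1)).trans hξ) B hB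
      have hinc' : TIncompat T a b := by
        rintro ⟨t, htT, hta, htb⟩
        exact hinc ⟨t, htT, hta.trans haA, htb.trans hbB⟩
      have har : a ≤ r := haA.trans hAr
      have hbr : b ≤ r := hbB.trans hBr
      refine ⟨a, haT, b, hbT, lt_of_le_not_ge har ?_, lt_of_le_not_ge hbr ?_, hinc', haL, hbL⟩
      · exact fun h => hinc' ⟨b, hbT, hbr.trans h, le_refl b⟩
      · exact fun h => hinc' ⟨a, haT, le_refl a, har.trans h⟩
    obtain ⟨q, hqT, hqr, hqlen⟩ :=
      scheme hctp (fun n => g n + 1) ⟨r0, hr0T⟩ hr0len step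
    refine ⟨q, hqT, hqr.trans hr0p, ?_⟩
    by_contra hlt
    push_neg at hlt
    have : q.len ∈ Set.range g := hg ▸ hlt
    obtain ⟨n, hn⟩ := this
    have h1 := hqlen n
    rw [hn, Ordinal.add_one_eq_succ] at h1
    exact (Order.lt_succ q.len).not_ge h1
end

section
/- Every uncountable Borel subset of the Cantor space 2^ω contains a subset homeomorphic to 2^ω. -/
lemma cantor_copy_aux (S : Set (ℕ → Bool)) (f : (ℕ → Bool) → (ℕ → Bool))
    (hfS : Set.range f ⊆ S) (hfc : Continuous f) (hfi : Function.Injective f) :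
    HasCantorSubset S :=
  ⟨Set.range f, hfS,
    ⟨(Topology.IsEmbedding.toHomeomorph (f := f) (hfc.isClosedEmbedding hfi).toIsEmbedding).symm⟩⟩

/-- Every uncountable Borel subset of the Cantor space 2^ω contains a
subset homeomorphic to 2^ω. -/
theorem stmt17 (S : Set (ℕ → Bool)) (hB : @MeasurableSet (ℕ → Bool) (borel (ℕ → Bool)) S)
    (hunc : ¬ S.Countable) : HasCantorSubset S := by
  have hBS : BorelSpace (ℕ → Bool) := inferInstance
  rw [← hBS.measurable_eq] at hB
  haveI : PolishSpace (ℕ → Bool) := {}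
  obtain ⟨t', hle, hpol, hclosed, -⟩ := hB.isClopenable
  obtain ⟨f, hfS, hfc, hfi⟩ :=
    @IsClosed.exists_nat_bool_injection_of_not_countable _ t' hpol S hclosed hunc
  exact cantor_copy_aux S f hfS (continuous_le_rng hle hfc) hfi
end

section
/- If κ < cov(M) and E_α ⊆ [0,1] is a meager set for each α < κ, then [0,1] \ ⋃_{α<κ} E_α contains a subset homeomorphic to the Cantor set. -/
open Set

noncomputable section

/-- the k-th binary digit of r (digit of 2^{-(k+1)}). -/
def rbit (k : ℕ) (r : ℝ) : Bool := decide (⌊r * 2^(k+1)⌋ % 2 = 1)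

/-- dyadic cell of level M with index j -/
def cell (M : ℕ) (j : ℤ) : Set ℝ := Set.Ico ((j : ℝ)/2^M) ((j+1 : ℝ)/2^M)

lemma cell_mem_left (M : ℕ) (j : ℤ) : ((j:ℝ)/2^M) ∈ cell M j := by
  refine ⟨le_refl _, ?_⟩
  have h : (0:ℝ) < 2^M := by positivity
  apply div_lt_div_of_pos_right ?_ h
  linarith

lemma floor_const_on_cell {M k : ℕ} (hk : k < M) (j : ℤ) {r : ℝ} (hr : r ∈ cell M j) :
    ⌊r * 2^(k+1)⌋ = j / 2^(M-k-1) := by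
  set d : ℕ := M - k - 1 with hd
  have hMk : M = (k+1) + d := by omega
  set q : ℤ := j / 2^d with hq
  set s : ℤ := j % 2^d with hs
  have hjqs : (2^d : ℤ) * q + s = j := Int.mul_ediv_add_emod j _
  have hs0 : (0:ℤ) ≤ s := Int.emod_nonneg j (by positivity)
  have hs1 : s < 2^d := Int.emod_lt_of_pos j (by positivity)
  obtain ⟨hr1, hr2⟩ := hr
  have hD : (0:ℝ) < 2^d := by positivity
  have hK : (0:ℝ) < 2^(k+1) := by positivity
  have hM2 : (2:ℝ)^M = 2^(k+1) * 2^d := by rw [hMk, pow_add]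
  have e1 : ((j:ℝ)) = 2^d * q + s := by
    have := congrArg (fun z : ℤ => (z : ℝ)) hjqs
    push_cast at this
    linarith [this]
  have hs0' : (0:ℝ) ≤ (s:ℝ) := by exact_mod_cast hs0
  have hs1' : (s:ℝ) + 1 ≤ 2^d := by
    have : s + 1 ≤ (2^d : ℤ) := hs1
    exact_mod_cast this
  have key1 : (j:ℝ)/2^M * 2^(k+1) = q + s/2^d := by
    rw [hM2, e1]; field_simp
  have key2 : ((j:ℝ)+1)/2^M * 2^(k+1) = q + (s+1)/2^d := by
    rw [hM2, e1]; field_simp; ring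
  rw [Int.floor_eq_iff]
  constructor
  · have h2 : (j:ℝ)/2^M * 2^(k+1) ≤ r * 2^(k+1) :=
      mul_le_mul_of_nonneg_right hr1 hK.le
    rw [key1] at h2
    have : (0:ℝ) ≤ (s:ℝ)/2^d := div_nonneg hs0' hD.le
    linarith
  · have h2 : r * 2^(k+1) < ((j:ℝ)+1)/2^M * 2^(k+1) :=
      mul_lt_mul_of_pos_right hr2 hK
    rw [key2] at h2
    have : ((s:ℝ)+1)/2^d ≤ 1 := (div_le_one hD).2 hs1'
    push_cast
    linarith

/-- bits below the cell level are constant on the cell -/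
lemma rbit_const_on_cell {M k : ℕ} (hk : k < M) (j : ℤ) {r r' : ℝ}
    (hr : r ∈ cell M j) (hr' : r' ∈ cell M j) : rbit k r = rbit k r' := by
  unfold rbit
  rw [floor_const_on_cell hk j hr, floor_const_on_cell hk j hr']

/-- refine a cell by one chosen bit -/
lemma cell_refine {M p : ℕ} (hp : M ≤ p) (j : ℤ) (ε : Bool) :
    ∃ j' : ℤ, cell (p+1) j' ⊆ cell M j ∧ ∀ r ∈ cell (p+1) j', rbit p r = ε := by
  set e : ℕ := p + 1 - M with he
  have he1 : 1 ≤ e := by omega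
  have hpe : p + 1 = M + e := by omega
  set c : ℤ := if ε then 1 else 0 with hcdef
  refine ⟨2^e * j + c, ?_, ?_⟩
  · intro r hr
    obtain ⟨h1, h2⟩ := hr
    have hc0 : (0:ℝ) ≤ (c:ℝ) := by rw [hcdef]; split <;> norm_num
    have hc1 : ((c:ℝ)) + 1 ≤ 2^e := by
      have h2e' : (2:ℝ)^1 ≤ 2^e := pow_le_pow_right₀ (by norm_num) he1
      rw [hcdef]; split <;> norm_num <;> linarith
    have hP : (0:ℝ) < 2^(p+1) := by positivity
    have hM : (0:ℝ) < 2^M := by positivity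
    have h2e : (2:ℝ)^(p+1) = 2^M * 2^e := by rw [hpe, pow_add]
    constructor
    · refine le_trans ?_ h1
      push_cast
      rw [div_le_div_iff₀ hM hP, h2e]
      nlinarith [mul_nonneg hc0 hM.le]
    · refine lt_of_lt_of_le h2 ?_
      push_cast
      rw [div_le_div_iff₀ hP hM, h2e]
      nlinarith [mul_nonneg hM.le (by linarith : (0:ℝ) ≤ 2^e - ((c:ℝ)+1))]
  · intro r hr
    have hfl := floor_const_on_cell (Nat.lt_succ_self p) _ hr
    unfold rbit
    rw [hfl]
    have h1 : (2:ℤ)^(p+1-p-1) = 1 := by norm_num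
    rw [h1, Int.ediv_one]
    have h2 : (2:ℤ) ∣ 2^e := dvd_pow_self 2 (by omega)
    rcases h2 with ⟨c2, hc2⟩
    rw [show ((2:ℤ)^e * j + c) = c + 2*(c2*j) by rw [hc2]; ring,
      Int.add_mul_emod_self_left]
    rw [hcdef]
    rcases ε <;> norm_num

/-- iterate refinement: fix all bits in [M, M+n) to values given by f -/
lemma cell_refine_many (M : ℕ) (j : ℤ) (f : ℕ → Bool) (n : ℕ) :
    ∃ j' : ℤ, cell (M+n) j' ⊆ cell M j ∧
      ∀ p, M ≤ p → p < M + n → ∀ r ∈ cell (M+n) j', rbit p r = f p := by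
  induction n with
  | zero => exact ⟨j, subset_rfl, fun p h1 h2 _ _ => absurd h2 (by omega)⟩
  | succ n ih =>
    obtain ⟨j', hsub, hbits⟩ := ih
    obtain ⟨j'', hsub', hbit'⟩ := cell_refine (show M + n ≤ M + n from le_refl _) j' (f (M+n))
    refine ⟨j'', by rw [show M+(n+1) = (M+n)+1 from rfl]; exact hsub'.trans hsub, ?_⟩
    intro p h1 h2 r hr
    rcases lt_or_ge p (M+n) with h | h
    · exact hbits p h1 h r (hsub' hr)
    · have : p = M + n := by omega
      subst this
      exact hbit' r hr

/-- small cells fit into any interval -/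
lemma cell_in_Ioo {u v : ℝ} (huv : u < v) : ∃ M j, cell M j ⊆ Set.Ioo u v := by
  obtain ⟨M, hM⟩ := pow_unbounded_of_one_lt (2/(v-u)) (one_lt_two (α := ℝ))
  have hM2 : (0:ℝ) < 2^M := by positivity
  have hM3 : 2/2^M < v - u := by
    rw [div_lt_iff₀ hM2] at *
    have hvu : 0 < v - u := by linarith
    rw [div_lt_iff₀ hvu] at hM
    nlinarith
  refine ⟨M, ⌊u * 2^M⌋ + 1, ?_⟩
  intro r ⟨h1, h2⟩
  have hl : u * 2^M < (⌊u * 2^M⌋ + 1 : ℝ) := Int.lt_floor_add_one _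
  have hfl : (⌊u * 2^M⌋ : ℝ) ≤ u * 2^M := Int.floor_le _
  constructor
  · have : u < ((⌊u * 2^M⌋ + 1 : ℤ) : ℝ)/2^M := by
      rw [lt_div_iff₀ hM2]; push_cast; linarith
    linarith [this.trans_le h1]
  · have : ((⌊u * 2^M⌋ + 1 : ℤ) + 1 : ℝ)/2^M < v := by
      rw [div_lt_iff₀ hM2]
      push_cast
      have := (div_lt_iff₀ hM2).1 hM3
      nlinarith
    exact h2.trans this


noncomputable section

-- block n r : the n-th move, decoded from column n of the bits of r
open Classical in
def rblock (n : ℕ) (r : ℝ) (rb : ℕ → ℝ → Bool) : ℕ :=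
  if h : ∃ i, rb (Nat.pair n i) r = false then Nat.find h else 0

abbrev RuleList := List ((ℚ × ℚ) × ((ℚ × ℚ) × (ℚ × ℚ)))

/-- a valid split of an interval into two halved subintervals -/
def ValidSplit (J J₀ J₁ : ℚ × ℚ) : Prop :=
  J.1 ≤ J₀.1 ∧ J₀.1 < J₀.2 ∧ J₀.2 < J₁.1 ∧ J₁.1 < J₁.2 ∧ J₁.2 ≤ J.2 ∧
    J₀.2 - J₀.1 ≤ (J.2 - J.1)/2 ∧ J₁.2 - J₁.1 ≤ (J.2 - J.1)/2

instance (J J0 J1 : ℚ × ℚ) : Decidable (ValidSplit J J0 J1) := by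
  unfold ValidSplit; infer_instance

def dfltSplit (J : ℚ × ℚ) : (ℚ × ℚ) × (ℚ × ℚ) :=
  ((J.1 + (J.2-J.1)/8, J.1 + (J.2-J.1)/4), (J.2 - (J.2-J.1)/4, J.2 - (J.2-J.1)/8))

def look : RuleList → (ℚ × ℚ) → Option ((ℚ × ℚ) × (ℚ × ℚ))
  | [], _ => none
  | e :: L, J => if e.1 = J then some e.2 else look L J

lemma look_map (F : (ℚ×ℚ) → (ℚ×ℚ)×(ℚ×ℚ)) (ks : List (ℚ×ℚ)) {J : ℚ×ℚ} (hJ : J ∈ ks) :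
    look (ks.map fun k => (k, F k)) J = some (F J) := by
  induction ks with
  | nil => cases hJ
  | cons k ks ih =>
    rcases List.mem_cons.1 hJ with h | h
    · subst h; simp [look]
    · by_cases hk : k = J
      · subst hk; simp [look]
      · simp only [List.map_cons, look, if_neg hk]
        exact ih h

def splitRule (m : ℕ) (J : ℚ × ℚ) : (ℚ × ℚ) × (ℚ × ℚ) :=
  match (Encodable.decode m : Option RuleList) with
  | none => dfltSplit J
  | some L =>
    match look L J with
    | none => dfltSplit J
    | some P => if ValidSplit J P.1 P.2 then P else dfltSplit J

lemma validSplit_dflt {J : ℚ × ℚ} (h : J.1 < J.2) :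
    ValidSplit J (dfltSplit J).1 (dfltSplit J).2 := by
  obtain ⟨a, b⟩ := J
  simp only [dfltSplit, ValidSplit] at *
  refine ⟨by linarith, by linarith, by linarith, by linarith, by linarith, by linarith, by linarith⟩

lemma validSplit_splitRule (m : ℕ) {J : ℚ × ℚ} (h : J.1 < J.2) :
    ValidSplit J (splitRule m J).1 (splitRule m J).2 := by
  unfold splitRule
  rcases hdec : (Encodable.decode m : Option RuleList) with _ | L
  · exact validSplit_dflt h
  · dsimp only
    rcases hl : look L J with _ | P
    · exact validSplit_dflt h
    · dsimp only
      by_cases hv : ValidSplit J P.1 P.2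
      · rw [if_pos hv]; exact hv
      · rw [if_neg hv]; exact validSplit_dflt h

lemma splitRule_eq {m : ℕ} {J : ℚ × ℚ} {L : RuleList} {P : (ℚ×ℚ)×(ℚ×ℚ)}
    (hm : (Encodable.decode m : Option RuleList) = some L)
    (hl : look L J = some P) (hv : ValidSplit J P.1 P.2) :
    splitRule m J = P := by
  unfold splitRule
  rw [hm]
  dsimp only
  rw [hl]
  dsimp only
  exact if_pos hv

/-- the interval scheme determined by a sequence of moves.
Strings are little-endian: newest bit at the head. -/
def schemeS (v : ℕ → ℕ) : List Bool → ℚ × ℚ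
  | [] => (1/4, 3/4)
  | b :: s => (if b then (splitRule (v s.length) (schemeS v s)).2
               else (splitRule (v s.length) (schemeS v s)).1)

lemma schemeS_lt (v : ℕ → ℕ) : ∀ s : List Bool, (schemeS v s).1 < (schemeS v s).2 := by
  intro s
  induction s with
  | nil => norm_num [schemeS]
  | cons b s ih =>
    have hV := validSplit_splitRule (v s.length) ih
    obtain ⟨h1, h2, h3, h4, h5, h6, h7⟩ := hV
    cases b <;> simpa [schemeS]

lemma schemeS_valid (v : ℕ → ℕ) (b : Bool) (s : List Bool) :
    ValidSplit (schemeS v s) (splitRule (v s.length) (schemeS v s)).1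
      (splitRule (v s.length) (schemeS v s)).2 :=
  validSplit_splitRule _ (schemeS_lt v s)

lemma schemeS_nest (v : ℕ → ℕ) (b : Bool) (s : List Bool) :
    (schemeS v s).1 ≤ (schemeS v (b :: s)).1 ∧
      (schemeS v (b :: s)).2 ≤ (schemeS v s).2 := by
  obtain ⟨h1, h2, h3, h4, h5, h6, h7⟩ := schemeS_valid v b s
  cases b <;> constructor <;> simp [schemeS] <;> linarith

lemma schemeS_len (v : ℕ → ℕ) : ∀ s : List Bool,
    (schemeS v s).2 - (schemeS v s).1 ≤ (1/2)^(s.length + 1) := by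
  intro s
  induction s with
  | nil => norm_num [schemeS]
  | cons b s ih =>
    obtain ⟨h1, h2, h3, h4, h5, h6, h7⟩ := schemeS_valid v b s
    have : ((schemeS v s).2 - (schemeS v s).1)/2 ≤ (1/2)^(s.length+1+1) := by
      rw [pow_succ]
      linarith
    cases b
    · have e : schemeS v (false :: s) = (splitRule (v s.length) (schemeS v s)).1 := by
        simp [schemeS]
      rw [show (false :: s).length = s.length + 1 from rfl, e]
      linarith
    · have e : schemeS v (true :: s) = (splitRule (v s.length) (schemeS v s)).2 := by
        simp [schemeS]
      rw [show (true :: s).length = s.length + 1 from rfl, e]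
      linarith

lemma schemeS_sibling (v : ℕ → ℕ) (s : List Bool) :
    (schemeS v (false :: s)).2 < (schemeS v (true :: s)).1 := by
  obtain ⟨h1, h2, h3, h4, h5, h6, h7⟩ := schemeS_valid v true s
  simpa [schemeS]

lemma schemeS_local {v w : ℕ → ℕ} : ∀ {s : List Bool},
    (∀ k, k < s.length → v k = w k) → schemeS v s = schemeS w s := by
  intro s
  induction s with
  | nil => intro _; rfl
  | cons b s ih =>
    intro h
    have hs : schemeS v s = schemeS w s :=
      ih fun k hk => h k (by simp [List.length_cons]; omega)
    have hv : v s.length = w s.length := h s.length (by simp)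
    simp [schemeS, hs, hv]
def str (x : ℕ → Bool) : ℕ → List Bool
  | 0 => []
  | n+1 => x n :: str x n

@[simp] lemma str_length (x : ℕ → Bool) (n : ℕ) : (str x n).length = n := by
  induction n with
  | zero => rfl
  | succ n ih => simp [str, ih]

lemma str_congr {x y : ℕ → Bool} {n : ℕ} (h : ∀ i, i < n → x i = y i) :
    str x n = str y n := by
  induction n with
  | zero => rfl
  | succ n ih =>
    simp only [str]
    rw [h n (by omega), ih fun i hi => h i (by omega)]

section Branch
variable (v : ℕ → ℕ)

def branchA (x : ℕ → Bool) (n : ℕ) : ℝ := ((schemeS v (str x n)).1 : ℝ)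
def branchB (x : ℕ → Bool) (n : ℕ) : ℝ := ((schemeS v (str x n)).2 : ℝ)

lemma branchA_mono (x : ℕ → Bool) : Monotone (branchA v x) := by
  apply monotone_nat_of_le_succ
  intro n
  have := (schemeS_nest v (x n) (str x n)).1
  unfold branchA
  rw [show str x (n+1) = x n :: str x n from rfl]
  exact_mod_cast this

lemma branchB_anti (x : ℕ → Bool) : Antitone (branchB v x) := by
  apply antitone_nat_of_succ_le
  intro n
  have := (schemeS_nest v (x n) (str x n)).2
  unfold branchB
  rw [show str x (n+1) = x n :: str x n from rfl]
  exact_mod_cast this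

lemma branchAB (x : ℕ → Bool) (n : ℕ) : branchA v x n ≤ branchB v x n := by
  have := (schemeS_lt v (str x n)).le
  unfold branchA branchB
  exact_mod_cast this

lemma branch_cross (x : ℕ → Bool) (m n : ℕ) : branchA v x m ≤ branchB v x n := by
  calc branchA v x m ≤ branchA v x (max m n) := branchA_mono v x (le_max_left m n)
    _ ≤ branchB v x (max m n) := branchAB v x _
    _ ≤ branchB v x n := branchB_anti v x (le_max_right m n)

lemma branch_bdd (x : ℕ → Bool) : BddAbove (Set.range (branchA v x)) := by
  refine ⟨branchB v x 0, ?_⟩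
  rintro _ ⟨m, rfl⟩
  exact branch_cross v x m 0

def Hpt (x : ℕ → Bool) : ℝ := ⨆ n, branchA v x n

lemma Hpt_mem (x : ℕ → Bool) (n : ℕ) :
    Hpt v x ∈ Set.Icc (branchA v x n) (branchB v x n) := by
  constructor
  · exact le_ciSup (branch_bdd v x) n
  · exact ciSup_le fun m => branch_cross v x m n

lemma branch_diam (x : ℕ → Bool) (n : ℕ) :
    branchB v x n - branchA v x n ≤ (1/2)^n := by
  have h := schemeS_len v (str x n)
  rw [str_length] at h
  have h' : ((schemeS v (str x n)).2 : ℝ) - ((schemeS v (str x n)).1 : ℝ) ≤ ((1:ℝ)/2)^(n+1) := by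
    have h2 := (Rat.cast_le (K := ℝ)).2 h
    push_cast at h2
    convert h2 using 2
  have : ((1:ℝ)/2)^(n+1) ≤ (1/2)^n := by
    apply pow_le_pow_of_le_one <;> norm_num
  unfold branchA branchB
  push_cast
  linarith

lemma Hpt_close {x y : ℕ → Bool} {n : ℕ} (h : ∀ i, i < n → x i = y i) :
    |Hpt v x - Hpt v y| ≤ (1/2)^n := by
  have hs : str x n = str y n := str_congr h
  have hx := Hpt_mem v x n
  have hy := Hpt_mem v y n
  have hAy : branchA v y n = branchA v x n := by unfold branchA; rw [hs]
  have hBy : branchB v y n = branchB v x n := by unfold branchB; rw [hs]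
  rw [hAy, hBy] at hy
  have := branch_diam v x n
  rw [abs_le]
  constructor <;> [skip; skip] <;>
    (obtain ⟨h1, h2⟩ := hx; obtain ⟨h3, h4⟩ := hy; linarith)

lemma Hpt_continuous : Continuous (Hpt v) := by
  rw [continuous_iff_continuousAt]
  intro x
  rw [ContinuousAt, Metric.tendsto_nhds]
  intro ε hε
  obtain ⟨n, hn⟩ : ∃ n : ℕ, ((1:ℝ)/2)^n < ε := exists_pow_lt_of_lt_one hε (by norm_num)
  have hcyl : {y : ℕ → Bool | ∀ i, i < n → y i = x i} ∈ nhds x := by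
    have he : {y : ℕ → Bool | ∀ i, i < n → y i = x i}
        = ⋂ i ∈ Finset.range n, {y : ℕ → Bool | y i = x i} := by
      ext y; simp [Finset.mem_range]
    rw [he]
    refine (Filter.biInter_finset_mem _).2 fun i _ => ?_
    have he2 : {y : ℕ → Bool | y i = x i} = (fun y : ℕ → Bool => y i) ⁻¹' {x i} := rfl
    have ho : IsOpen {y : ℕ → Bool | y i = x i} := by
      rw [he2]
      exact (continuous_apply i).isOpen_preimage _ (isOpen_discrete _)
    exact ho.mem_nhds rfl
  refine Filter.mem_of_superset hcyl ?_
  intro y hy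
  have := Hpt_close v (x := y) (y := x) (n := n) hy
  have hd : dist (Hpt v y) (Hpt v x) = |Hpt v y - Hpt v x| := Real.dist_eq _ _
  simp only [Set.mem_setOf_eq]
  rw [hd]
  linarith
end Branch

section Inj
variable (v : ℕ → ℕ)

lemma Hpt_lt {x y : ℕ → Bool} (n : ℕ) (hagree : ∀ i, i < n → x i = y i)
    (hx : x n = false) (hy : y n = true) : Hpt v x < Hpt v y := by
  have hs : str x n = str y n := str_congr hagree
  have h1 := (Hpt_mem v x (n+1)).2
  have h2 := (Hpt_mem v y (n+1)).1
  have hsib := schemeS_sibling v (str x n)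
  unfold branchB at h1
  unfold branchA at h2
  rw [show str x (n+1) = x n :: str x n from rfl, hx] at h1
  rw [show str y (n+1) = y n :: str y n from rfl, hy, ← hs] at h2
  have hc : ((schemeS v (false :: str x n)).2 : ℝ) < ((schemeS v (true :: str x n)).1 : ℝ) := by
    exact_mod_cast hsib
  linarith

lemma Hpt_inj : Function.Injective (Hpt v) := by
  intro x y hxy
  by_contra hne
  have hex : ∃ n, x n ≠ y n := by
    by_contra h
    push_neg at h
    exact hne (funext h)
  set n := Nat.find hex with hn
  have hdiff : x n ≠ y n := Nat.find_spec hex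
  have hagree : ∀ i, i < n → x i = y i := fun i hi => not_not.1 (Nat.find_min hex hi)
  rcases hbx : x n with _ | _ <;> rcases hby : y n with _ | _
  · exact hdiff (hbx.trans hby.symm)
  · exact absurd hxy (Hpt_lt v n hagree hbx hby).ne
  · exact absurd hxy.symm (Hpt_lt v n (fun i hi => (hagree i hi).symm) hby hbx).ne
  · exact hdiff (hbx.trans hby.symm)
end Inj

/-- inside any interval there is a rational closed subinterval avoiding a closed nwd set -/
lemma subint_avoiding {N : Set ℝ} (hcl : IsClosed N) (hint : interior N = ∅)
    {u v : ℝ} (huv : u < v) :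
    ∃ c d : ℚ, u < (c:ℝ) ∧ (c:ℝ) < (d:ℝ) ∧ (d:ℝ) < v ∧ Set.Icc (c:ℝ) (d:ℝ) ∩ N = ∅ := by
  have hopen : IsOpen (Set.Ioo u v ∩ Nᶜ) := (isOpen_Ioo).inter hcl.isOpen_compl
  have hne : (Set.Ioo u v ∩ Nᶜ).Nonempty := by
    by_contra h
    rw [Set.not_nonempty_iff_eq_empty] at h
    have hsub : Set.Ioo u v ⊆ N := by
      intro z hz
      by_contra hzN
      exact Set.eq_empty_iff_forall_notMem.1 h z ⟨hz, hzN⟩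
    have : Set.Ioo u v ⊆ interior N := interior_maximal hsub isOpen_Ioo
    rw [hint] at this
    exact Set.eq_empty_iff_forall_notMem.1 (Set.subset_empty_iff.1 this)
      ((u+v)/2) (by constructor <;> linarith)
  obtain ⟨x, hx⟩ := hne
  obtain ⟨ε, hε, hball⟩ := Metric.isOpen_iff.1 hopen x hx
  obtain ⟨c, hc1, hc2⟩ := exists_rat_btwn (show x - ε < x by linarith)
  obtain ⟨d, hd1, hd2⟩ := exists_rat_btwn (show x < x + ε by linarith)
  have hsubball : Set.Icc (c:ℝ) (d:ℝ) ⊆ Set.Ioo u v ∩ Nᶜ := by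
    intro z hz
    apply hball
    rw [Metric.mem_ball, Real.dist_eq, abs_lt]
    obtain ⟨hz1, hz2⟩ := hz
    constructor <;> linarith
  refine ⟨c, d, ?_, by linarith, ?_, ?_⟩
  · have := hsubball ⟨le_refl _, by linarith⟩
    exact this.1.1
  · have := hsubball ⟨by linarith, le_refl _⟩
    exact this.1.2
  · rw [Set.eq_empty_iff_forall_notMem]
    rintro z ⟨hz1, hz2⟩
    exact (hsubball hz1).2 hz2

lemma exists_good_split (N : Set ℝ) (hcl : IsClosed N) (hint : interior N = ∅)
    {J : ℚ × ℚ} (hab : J.1 < J.2) :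
    ∃ P : (ℚ×ℚ)×(ℚ×ℚ), ValidSplit J P.1 P.2 ∧
      Set.Icc ((P.1.1:ℝ)) ((P.1.2:ℝ)) ∩ N = ∅ ∧ Set.Icc ((P.2.1:ℝ)) ((P.2.2:ℝ)) ∩ N = ∅ := by
  obtain ⟨a, b⟩ := J
  simp only at hab
  have hab2 : (a:ℝ) < (b:ℝ) := by exact_mod_cast hab
  have hm1 : (a:ℝ) < ((a:ℝ) + (b:ℝ))/2 := by linarith
  have hm2 : ((a:ℝ) + (b:ℝ))/2 < (b:ℝ) := by linarith
  obtain ⟨c₀, d₀, h01, h02, h03, h04⟩ := subint_avoiding hcl hint hm1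
  obtain ⟨c₁, d₁, h11, h12, h13, h14⟩ := subint_avoiding hcl hint hm2
  refine ⟨((c₀, d₀), (c₁, d₁)), ?_, h04, h14⟩
  have q1 : a < c₀ := by exact_mod_cast h01
  have q2 : c₀ < d₀ := by exact_mod_cast h02
  have q3 : (d₀:ℝ) < (c₁:ℝ) := by linarith
  have q3b : d₀ < c₁ := by exact_mod_cast q3
  have q4 : c₁ < d₁ := by exact_mod_cast h12
  have q5 : d₁ < b := by exact_mod_cast h13
  have q6 : (d₀:ℝ) - (c₀:ℝ) ≤ ((b:ℝ) - (a:ℝ))/2 := by linarith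
  have q6b : d₀ - c₀ ≤ (b - a)/2 := by exact_mod_cast q6
  have q7 : (d₁:ℝ) - (c₁:ℝ) ≤ ((b:ℝ) - (a:ℝ))/2 := by linarith
  have q7b : d₁ - c₁ ≤ (b - a)/2 := by exact_mod_cast q7
  exact ⟨q1.le, q2, q3b, q4, q5.le, q6b, q7b⟩

/-- choice of a good split avoiding N -/
def goodSplit (N : Set ℝ) (hcl : IsClosed N) (hint : interior N = ∅) (J : ℚ × ℚ) :
    (ℚ×ℚ)×(ℚ×ℚ) :=
  if h : J.1 < J.2 then Classical.choose (exists_good_split N hcl hint h) else dfltSplit J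

lemma goodSplit_spec (N : Set ℝ) (hcl : IsClosed N) (hint : interior N = ∅) {J : ℚ × ℚ}
    (h : J.1 < J.2) :
    ValidSplit J (goodSplit N hcl hint J).1 (goodSplit N hcl hint J).2 ∧
      Set.Icc (((goodSplit N hcl hint J).1.1:ℝ)) (((goodSplit N hcl hint J).1.2:ℝ)) ∩ N = ∅ ∧
      Set.Icc (((goodSplit N hcl hint J).2.1:ℝ)) (((goodSplit N hcl hint J).2.2:ℝ)) ∩ N = ∅ := by
  unfold goodSplit
  rw [dif_pos h]
  exact Classical.choose_spec (exists_good_split N hcl hint h)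

def allStrings : ℕ → List (List Bool)
  | 0 => [[]]
  | n+1 => (allStrings n).flatMap fun s => [false :: s, true :: s]

lemma mem_allStrings : ∀ (n : ℕ) (s : List Bool), s.length = n → s ∈ allStrings n := by
  intro n
  induction n with
  | zero =>
    intro s hs
    rw [List.length_eq_zero_iff] at hs
    subst hs
    simp [allStrings]
  | succ n ih =>
    intro s hs
    rcases s with _ | ⟨b, t⟩
    · simp at hs
    · have ht : t.length = n := by simpa using hs
      simp only [allStrings, List.mem_flatMap]
      exact ⟨t, ih t ht, by cases b <;> simp⟩

/-- the moves extracted from a real parameter -/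
def moves (r : ℝ) : ℕ → ℕ := fun n => rblock n r rbit

/-- r is good for N : some level of its scheme completely avoids N -/
def GoodParam (N : Set ℝ) (r : ℝ) : Prop :=
  ∃ n, ∀ s : List Bool, s.length = n →
    Set.Icc ((schemeS (moves r) s).1 : ℝ) ((schemeS (moves r) s).2 : ℝ) ∩ N = ∅

open Classical in
lemma key_dense (N : Set ℝ) (hcl : IsClosed N) (hint : interior N = ∅)
    {u v : ℝ} (huv : u < v) :
    ∃ c d : ℝ, c < d ∧ Set.Ioo c d ⊆ Set.Ioo u v ∧ ∀ r ∈ Set.Ioo c d, GoodParam N r := by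
  obtain ⟨M₀, j₀, hcell⟩ := cell_in_Ioo huv
  set n' : ℕ := M₀ + 1 with hn'
  set base : ℝ := (j₀:ℝ)/2^M₀ with hbase_def
  have hbase : base ∈ cell M₀ j₀ := cell_mem_left _ _
  -- the index where column n first reaches level M₀
  have hiNex : ∀ n : ℕ, ∃ i, M₀ ≤ Nat.pair n i := fun n => ⟨M₀, Nat.right_le_pair n M₀⟩
  set iN : ℕ → ℕ := fun n => Nat.find (hiNex n) with hiN_def
  have hiN_ge : ∀ n, M₀ ≤ Nat.pair n (iN n) := fun n => Nat.find_spec (hiNex n)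
  have hiN_min : ∀ n i, i < iN n → Nat.pair n i < M₀ := by
    intro n i hi
    have := Nat.find_min (hiNex n) hi
    omega
  -- the predetermined moves
  set v' : ℕ → ℕ := fun n =>
    if h : ∃ i, Nat.pair n i < M₀ ∧ rbit (Nat.pair n i) base = false
    then Nat.find h else iN n with hv'_def
  -- the rule list killing N at level n', and its code
  set F : (ℚ×ℚ) → (ℚ×ℚ)×(ℚ×ℚ) := goodSplit N hcl hint with hF_def
  set L : RuleList := (allStrings n').map (fun s => (schemeS v' s, F (schemeS v' s))) with hL_def
  set m' : ℕ := Encodable.encode L with hm'_def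
  set vfin : ℕ → ℕ := Function.update v' n' m' with hvfin_def
  -- bit targets on [M₀, M₀+K)
  set f : ℕ → Bool := fun p =>
    if p = Nat.pair n' m' then false
    else if ∃ n, n < n' ∧ (¬ ∃ i, Nat.pair n i < M₀ ∧ rbit (Nat.pair n i) base = false) ∧
      p = Nat.pair n (iN n) then false else true with hf_def
  set K : ℕ := Nat.pair n' m' + ((Finset.range n').sup fun n => Nat.pair n (iN n)) + 1 with hK_def
  obtain ⟨jf, hsub, hbits⟩ := cell_refine_many M₀ j₀ f K
  -- bits below M₀ on the final cell agree with base
  have hbitlow : ∀ p, p < M₀ → ∀ r ∈ cell (M₀+K) jf, rbit p r = rbit p base :=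
    fun p hp r hr => rbit_const_on_cell hp j₀ (hsub hr) hbase
  -- column n' positions are ≥ M₀ and pair n' i for i ≤ m' is < M₀ + K
  have hcolge : ∀ i : ℕ, M₀ ≤ Nat.pair n' i := by
    intro i
    have := Nat.left_le_pair n' i
    omega
  have hposK : Nat.pair n' m' < M₀ + K := by omega
  -- determination of the moves on the final cell
  have hmoves_low : ∀ n, n < n' → ∀ r ∈ cell (M₀+K) jf, moves r n = v' n := by
    intro n hn r hr
    unfold moves rblock
    by_cases hdet : ∃ i, Nat.pair n i < M₀ ∧ rbit (Nat.pair n i) base = false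
    · -- already determined by the base cell
      have hv'n : v' n = Nat.find hdet := by simp only [hv'_def]; exact dif_pos hdet
      have hspec := Nat.find_spec hdet
      have hex : ∃ i, rbit (Nat.pair n i) r = false := by
        refine ⟨Nat.find hdet, ?_⟩
        rw [hbitlow _ hspec.1 r hr]
        exact hspec.2
      rw [dif_pos hex, hv'n]
      rw [Nat.find_eq_iff]
      constructor
      · rw [hbitlow _ hspec.1 r hr]; exact hspec.2
      · intro i hi
        have hlt : Nat.pair n i < M₀ := lt_trans (Nat.pair_lt_pair_right n hi) hspec.1
        rw [hbitlow _ hlt r hr]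
        have := Nat.find_min hdet hi
        simp only [not_and] at this
        intro hfalse
        exact this hlt hfalse
    · -- forced : we planted a zero at column position iN n
      have hv'n : v' n = iN n := by simp only [hv'_def]; exact dif_neg hdet
      have hposn : Nat.pair n (iN n) < M₀ + K := by
        have hle : Nat.pair n (iN n) ≤ (Finset.range n').sup fun k => Nat.pair k (iN k) :=
          Finset.le_sup (f := fun k => Nat.pair k (iN k)) (Finset.mem_range.2 hn)
        omega
      have hfval : f (Nat.pair n (iN n)) = false := by
        have hne1 : ¬ (Nat.pair n (iN n) = Nat.pair n' m') := by
          intro hpe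
          rw [Nat.pair_eq_pair] at hpe
          omega
        have hyes : ∃ k, k < n' ∧ (¬ ∃ i, Nat.pair k i < M₀ ∧ rbit (Nat.pair k i) base = false) ∧
            Nat.pair n (iN n) = Nat.pair k (iN k) := ⟨n, hn, hdet, rfl⟩
        simp only [hf_def]
        rw [if_neg hne1, if_pos hyes]
      have hbitn : rbit (Nat.pair n (iN n)) r = false := by
        rw [hbits _ (hiN_ge n) hposn r hr, hfval]
      have hex : ∃ i, rbit (Nat.pair n i) r = false := ⟨iN n, hbitn⟩
      rw [dif_pos hex, hv'n]
      rw [Nat.find_eq_iff]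
      refine ⟨hbitn, ?_⟩
      intro i hi
      have hlt : Nat.pair n i < M₀ := hiN_min n i hi
      rw [hbitlow _ hlt r hr]
      intro hfalse
      exact hdet ⟨i, hlt, hfalse⟩
  have hmoves_top : ∀ r ∈ cell (M₀+K) jf, moves r n' = m' := by
    intro r hr
    unfold moves rblock
    have hbitm : rbit (Nat.pair n' m') r = false := by
      rw [hbits _ (hcolge m') hposK r hr]
      simp only [hf_def]
      simp
    have hex : ∃ i, rbit (Nat.pair n' i) r = false := ⟨m', hbitm⟩
    rw [dif_pos hex]
    rw [Nat.find_eq_iff]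
    refine ⟨hbitm, ?_⟩
    intro i hi
    have hposi : Nat.pair n' i < M₀ + K :=
      lt_trans (Nat.pair_lt_pair_right n' hi) hposK
    rw [hbits _ (hcolge i) hposi r hr]
    have hne1 : ¬ (Nat.pair n' i = Nat.pair n' m') := by
      intro hpe
      rw [Nat.pair_eq_pair] at hpe
      omega
    have hne2 : ¬ ∃ k, k < n' ∧ (¬ ∃ l, Nat.pair k l < M₀ ∧ rbit (Nat.pair k l) base = false) ∧
        Nat.pair n' i = Nat.pair k (iN k) := by
      rintro ⟨k, hk, -, hpe⟩
      rw [Nat.pair_eq_pair] at hpe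
      omega
    simp only [hf_def]
    rw [if_neg hne1, if_neg hne2]
    simp
  -- conclusion
  refine ⟨(jf:ℝ)/2^(M₀+K), ((jf:ℝ)+1)/2^(M₀+K), ?_, ?_, ?_⟩
  · have h2 : (0:ℝ) < 2^(M₀+K) := by positivity
    apply div_lt_div_of_pos_right ?_ h2
    linarith
  · intro r hr
    exact hcell (hsub ⟨hr.1.le, hr.2⟩)
  · intro r hr
    have hrc : r ∈ cell (M₀+K) jf := ⟨hr.1.le, hr.2⟩
    refine ⟨n' + 1, ?_⟩
    intro s hs
    rcases s with _ | ⟨b, t⟩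
    · simp at hs
    · have ht : t.length = n' := by simpa using hs
      have hloc : schemeS (moves r) t = schemeS v' t := by
        apply schemeS_local
        intro k hk
        rw [ht] at hk
        exact hmoves_low k hk r hrc
      have hltJ : (schemeS v' t).1 < (schemeS v' t).2 := schemeS_lt v' t
      have hspec := goodSplit_spec N hcl hint hltJ
      have hlook : look L (schemeS v' t) = some (F (schemeS v' t)) := by
        have hmm : L = ((allStrings n').map (schemeS v')).map (fun k => (k, F k)) := by
          rw [List.map_map]
          rfl
        rw [hmm]
        exact look_map _ _ (List.mem_map_of_mem (mem_allStrings n' t ht))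
      have hsr : splitRule (moves r t.length) (schemeS (moves r) t) = F (schemeS v' t) := by
        rw [ht, hmoves_top r hrc, hloc]
        exact splitRule_eq (Encodable.encodek L) hlook hspec.1
      cases b
      · have he : schemeS (moves r) (false :: t) = (F (schemeS v' t)).1 := by
          simp [schemeS, hsr]
        rw [he]
        exact hspec.2.1
      · have he : schemeS (moves r) (true :: t) = (F (schemeS v' t)).2 := by
          simp [schemeS, hsr]
        rw [he]
        exact hspec.2.2

lemma badSet_meagre (N : Set ℝ) (hcl : IsClosed N) (hint : interior N = ∅) :
    IsMeagre {r : ℝ | ¬ GoodParam N r} := by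
  set B := {r : ℝ | ¬ GoodParam N r} with hB
  have hno : interior (closure B) = ∅ := by
    by_contra h
    obtain ⟨x, hx⟩ := Set.nonempty_iff_ne_empty.2 h
    obtain ⟨ε, hε, hball⟩ := Metric.isOpen_iff.1 isOpen_interior x hx
    obtain ⟨c, d, hcd, hsub2, hgood⟩ := key_dense N hcl hint (show x - ε < x + ε by linarith)
    have hIooball : Set.Ioo (x-ε) (x+ε) ⊆ Metric.ball x ε := by
      rw [Real.ball_eq_Ioo]
    have hmidIoo : (c+d)/2 ∈ Set.Ioo c d := by constructor <;> linarith
    have hmid : (c+d)/2 ∈ closure B :=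
      interior_subset (hball (hIooball (hsub2 hmidIoo)))
    obtain ⟨y, hyIoo, hyB⟩ := mem_closure_iff.1 hmid (Set.Ioo c d) isOpen_Ioo hmidIoo
    exact hyB (hgood y hyIoo)
  have hdense : Dense (closure B)ᶜ := by
    rwa [← interior_eq_empty_iff_dense_compl]
  rw [IsMeagre]
  apply Filter.mem_of_superset (residual_of_dense_open isClosed_closure.isOpen_compl hdense)
  exact Set.compl_subset_compl.2 subset_closure

/-- cov(M): the least cardinal κ such that ℝ is the union of κ meager sets. -/
noncomputable def covMeager : Cardinal :=
  sInf {κ : Cardinal | ∃ (ι : Type) (E : ι → Set ℝ), Cardinal.mk ι = κ ∧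
    (∀ i, IsMeagre (E i)) ∧ (⋃ i, E i) = Set.univ}

lemma aleph0_lt_covMeager : Cardinal.aleph0 < covMeager := by
  have hne : {κ : Cardinal | ∃ (ι : Type) (E : ι → Set ℝ), Cardinal.mk ι = κ ∧
      (∀ i, IsMeagre (E i)) ∧ (⋃ i, E i) = Set.univ}.Nonempty := by
    refine ⟨Cardinal.mk ℝ, ℝ, fun r => {r}, rfl, ?_, ?_⟩
    · intro r
      rw [IsMeagre]
      exact residual_of_dense_open isOpen_compl_singleton (dense_compl_singleton r)
    · ext x
      simp
  have hgt : ∀ κ ∈ {κ : Cardinal | ∃ (ι : Type) (E : ι → Set ℝ), Cardinal.mk ι = κ ∧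
      (∀ i, IsMeagre (E i)) ∧ (⋃ i, E i) = Set.univ}, Cardinal.aleph0 < κ := by
    rintro κ ⟨ι, E, hmk, hE, huniv⟩
    by_contra hle
    push_neg at hle
    rw [← hmk] at hle
    have hcnt : Countable ι := Cardinal.mk_le_aleph0_iff.1 hle
    have hmeag : IsMeagre (⋃ i, E i) := by
      rw [IsMeagre, Set.compl_iUnion]
      exact (countable_iInter_mem).2 fun i => hE i
    rw [huniv] at hmeag
    have hd : Dense (∅ : Set ℝ) := by
      have := dense_of_mem_residual (by rwa [IsMeagre, Set.compl_univ] at hmeag)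
      exact this
    obtain ⟨z, hz⟩ := hd.nonempty
    exact hz
  unfold covMeager
  calc Cardinal.aleph0 < Order.succ Cardinal.aleph0 := Order.lt_succ _
    _ ≤ sInf _ := le_csInf hne fun κ hκ => Order.succ_le_of_lt (hgt κ hκ)

lemma exists_avoiding {σ : Type} (hσ : Cardinal.mk σ < covMeager) (B : σ → Set ℝ)
    (hB : ∀ i, IsMeagre (B i)) : ∃ r, ∀ i, r ∉ B i := by
  by_contra h
  push_neg at h
  have huniv : (⋃ i, B i) = Set.univ := by
    rw [Set.eq_univ_iff_forall]
    intro r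
    obtain ⟨i, hi⟩ := h r
    exact Set.mem_iUnion.2 ⟨i, hi⟩
  have hmemS : Cardinal.mk σ ∈ {κ : Cardinal | ∃ (ι : Type) (E : ι → Set ℝ),
      Cardinal.mk ι = κ ∧ (∀ i, IsMeagre (E i)) ∧ (⋃ i, E i) = Set.univ} :=
    ⟨σ, B, rfl, hB, huniv⟩
  have hmem : covMeager ≤ Cardinal.mk σ := csInf_le' hmemS
  exact absurd hσ (not_lt.2 hmem)

lemma meagre_subtype_decomp (E : Set (Set.Icc (0:ℝ) 1)) (hE : IsMeagre E) :
    ∃ N : ℕ → Set ℝ, (∀ n, IsClosed (N n) ∧ interior (N n) = ∅) ∧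
      (Subtype.val '' E) ⊆ ⋃ n, N n := by
  obtain ⟨S, hS, hSc, hsub⟩ := isMeagre_iff_countable_union_isNowhereDense.1 hE
  have hSc2 : (insert ∅ S).Countable := hSc.insert ∅
  have hne : (insert ∅ S).Nonempty := ⟨∅, Set.mem_insert _ _⟩
  obtain ⟨g, hg⟩ := hSc2.exists_eq_range hne
  have hgnwd : ∀ n, IsNowhereDense (g n) := by
    intro n
    have : g n ∈ insert ∅ S := by rw [hg]; exact ⟨n, rfl⟩
    rcases Set.mem_insert_iff.1 this with h | h
    · rw [h]; exact isNowhereDense_empty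
    · exact hS _ h
  have hval : Topology.IsClosedEmbedding (Subtype.val : Set.Icc (0:ℝ) 1 → ℝ) :=
    IsClosed.isClosedEmbedding_subtypeVal isClosed_Icc
  refine ⟨fun n => Subtype.val '' closure (g n), fun n => ⟨?_, ?_⟩, ?_⟩
  · exact hval.isClosedMap _ isClosed_closure
  · -- interior of image is empty
    by_contra h
    obtain ⟨x, hx⟩ := Set.nonempty_iff_ne_empty.2 h
    have hxT : x ∈ Subtype.val '' closure (g n) := interior_subset hx
    obtain ⟨y, hy, hyx⟩ := hxT
    have hopen : IsOpen (Subtype.val ⁻¹'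
        (interior (Subtype.val '' closure (g n))) : Set (Set.Icc (0:ℝ) 1)) :=
      isOpen_interior.preimage continuous_subtype_val
    have hyU : y ∈ Subtype.val ⁻¹' (interior (Subtype.val '' closure (g n))) := by
      simp only [Set.mem_preimage, hyx]
      exact hx
    have hUsub : (Subtype.val ⁻¹' (interior (Subtype.val '' closure (g n))) :
        Set (Set.Icc (0:ℝ) 1)) ⊆ closure (g n) := by
      intro z hz
      have : (z : ℝ) ∈ Subtype.val '' closure (g n) := interior_subset hz
      obtain ⟨z', hz', hzz⟩ := this
      have : z' = z := Subtype.val_injective hzz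
      rwa [← this]
    have hUint : (Subtype.val ⁻¹' (interior (Subtype.val '' closure (g n))) :
        Set (Set.Icc (0:ℝ) 1)) ⊆ interior (closure (g n)) :=
      interior_maximal hUsub hopen
    have hnwd := (hgnwd n).closure
    rw [IsNowhereDense, closure_closure] at hnwd
    rw [hnwd] at hUint
    exact hUint hyU
  · rintro _ ⟨e, he, rfl⟩
    obtain ⟨t, htS, het⟩ := hsub he
    have : t ∈ insert ∅ S := Set.mem_insert_of_mem _ htS
    rw [hg] at this
    obtain ⟨n, rfl⟩ := this
    exact Set.mem_iUnion.2 ⟨n, Set.mem_image_of_mem _ (subset_closure het)⟩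

/-- If κ < cov(M) and E_α ⊆ [0,1] is meager for each α < κ, then
[0,1] minus the union of the E_α contains a copy of the Cantor set. -/
theorem stmt18 (ι : Type) (hι : Cardinal.mk ι < covMeager)
    (E : ι → Set (Set.Icc (0 : ℝ) 1)) (hE : ∀ i, IsMeagre (E i)) :
    HasCantorSubset ((⋃ i, E i)ᶜ) := by
  classical
  choose N hNprop hNcov using fun i => meagre_subtype_decomp (E i) (hE i)
  set B : ι × ℕ → Set ℝ := fun p => {r | ¬ GoodParam (N p.1 p.2) r} with hBdef
  have hBm : ∀ p, IsMeagre (B p) := fun p =>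
    badSet_meagre _ (hNprop p.1 p.2).1 (hNprop p.1 p.2).2
  have hmkB : Cardinal.mk (ι × ℕ) < covMeager := by
    rw [Cardinal.mk_prod, Cardinal.lift_id, Cardinal.lift_id, Cardinal.mk_nat]
    exact Cardinal.mul_lt_of_lt aleph0_lt_covMeager.le hι aleph0_lt_covMeager
  obtain ⟨r, hr⟩ := exists_avoiding hmkB B hBm
  have hgood : ∀ i n, GoodParam (N i n) r := fun i n => not_not.1 (hr (i, n))
  set w : ℕ → ℕ := moves r with hwdef
  have hmemIcc : ∀ x, Hpt w x ∈ Set.Icc (0:ℝ) 1 := by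
    intro x
    have h0 := Hpt_mem w x 0
    have ha : branchA w x 0 = (1:ℝ)/4 := by
      unfold branchA
      rw [show str x 0 = [] from rfl]
      norm_num [schemeS]
    have hb : branchB w x 0 = (3:ℝ)/4 := by
      unfold branchB
      rw [show str x 0 = [] from rfl]
      norm_num [schemeS]
    rw [ha, hb] at h0
    obtain ⟨h1, h2⟩ := h0
    constructor
    · linarith
    · linarith
  have havoid : ∀ x i n, Hpt w x ∉ N i n := by
    intro x i n hmem
    obtain ⟨lvl, hlvl⟩ := hgood i n
    have hx := Hpt_mem w x lvl
    have hempty := hlvl (str x lvl) (str_length x lvl)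
    have : Hpt w x ∈ Set.Icc ((schemeS (moves r) (str x lvl)).1 : ℝ)
        ((schemeS (moves r) (str x lvl)).2 : ℝ) ∩ N i n := ⟨hx, hmem⟩
    rw [hempty] at this
    exact this
  let φ : (ℕ → Bool) → (Set.Icc (0:ℝ) 1) := fun x => ⟨Hpt w x, hmemIcc x⟩
  have hφc : Continuous φ := (Hpt_continuous w).subtype_mk _
  have hφi : Function.Injective φ := fun x y hxy =>
    Hpt_inj w (congrArg Subtype.val hxy)
  have hemb : Topology.IsClosedEmbedding φ := hφc.isClosedEmbedding hφi
  refine ⟨Set.range φ, ?_, ⟨(hemb.toIsEmbedding.toHomeomorph).symm⟩⟩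
  rintro _ ⟨x, rfl⟩ hmem
  obtain ⟨i, hi⟩ := Set.mem_iUnion.1 hmem
  have : (φ x : ℝ) ∈ Subtype.val '' E i := Set.mem_image_of_mem _ hi
  have := hNcov i this
  obtain ⟨n, hn⟩ := Set.mem_iUnion.1 this
  exact havoid x i n hn
end
end
end
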